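/- arXiv:1703.01217 — 8 statements merged into one kernel-verified Lean document; each statement's English description precedes it below -/
import Mathlib

section
/- Let (E,A,B) be an IDE system and let λ ∈ ℂ with det(λE−A) ≠ 0. Then for every u ∈ ℂ^m the stacked vector ((λE−A)⁻¹Bu ; u) ∈ ℂ^{n+m} belongs to the system space 𝒱 of (E,A,B); equivalently, the column space of the (n+m)×m matrix [(λE−A)⁻¹B ; I_m] is contained in 𝒱. -/
/-! The vector `((λE − A)⁻¹ B u ; u)` is the initial value of the geometric trajectory
`x_j = λ^j (λE − A)⁻¹ B u`, `u_j = λ^j u`. -/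

open Matrix Filter
open scoped ComplexOrder

set_option synthInstance.maxHeartbeats 1000000
set_option maxHeartbeats 1000000

noncomputable section

/-- The behavior of the implicit difference equation `E x_{j+1} = A x_j + B u_j`. -/
def IsBehavior {n m : ℕ} (E A : Matrix (Fin n) (Fin n) ℂ) (B : Matrix (Fin n) (Fin m) ℂ)
    (x : ℕ → Fin n → ℂ) (u : ℕ → Fin m → ℂ) : Prop :=
  ∀ j : ℕ, E *ᵥ x (j + 1) = A *ᵥ x j + B *ᵥ u j

/-- The system space: the smallest subspace of `ℂ^{n+m}` containing all stacked vectors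
`(x_j ; u_j)` of behavior trajectories. -/
def systemSpace {n m : ℕ} (E A : Matrix (Fin n) (Fin n) ℂ) (B : Matrix (Fin n) (Fin m) ℂ) :
    Submodule ℂ (Fin n ⊕ Fin m → ℂ) :=
  Submodule.span ℂ {v : Fin n ⊕ Fin m → ℂ |
    ∃ x u, IsBehavior E A B x u ∧ ∃ j : ℕ, v = Sum.elim (x j) (u j)}

/-- The pencil `zE - A` is regular: its determinant is not the zero polynomial. -/
def RegularPencil {n : ℕ} (E A : Matrix (Fin n) (Fin n) ℂ) : Prop :=
  ((Polynomial.X : Polynomial ℂ) • E.map ⇑(Polynomial.C (R := ℂ)) - A.map ⇑(Polynomial.C (R := ℂ))).det ≠ 0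

/-- The KYP matrix `M(P)`. -/
def kypM {n m : ℕ} (E A : Matrix (Fin n) (Fin n) ℂ) (B : Matrix (Fin n) (Fin m) ℂ)
    (Q : Matrix (Fin n) (Fin n) ℂ) (S : Matrix (Fin n) (Fin m) ℂ)
    (R : Matrix (Fin m) (Fin m) ℂ) (P : Matrix (Fin n) (Fin n) ℂ) :
    Matrix (Fin n ⊕ Fin m) (Fin n ⊕ Fin m) ℂ :=
  fromBlocks (Aᴴ * P * A - Eᴴ * P * E + Q) (Aᴴ * P * B + S)
    (Bᴴ * P * A + Sᴴ) (Bᴴ * P * B + R)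

/-- The Popov function evaluated at a point `z ∈ ℂ` with `det (zE - A) ≠ 0`. -/
def popovEval {n m : ℕ} (E A : Matrix (Fin n) (Fin n) ℂ) (B : Matrix (Fin n) (Fin m) ℂ)
    (Q : Matrix (Fin n) (Fin n) ℂ) (S : Matrix (Fin n) (Fin m) ℂ)
    (R : Matrix (Fin m) (Fin m) ℂ) (z : ℂ) : Matrix (Fin m) (Fin m) ℂ :=
  (fromRows ((z • E - A)⁻¹ * B) (1 : Matrix (Fin m) (Fin m) ℂ))ᴴ *
    fromBlocks Q S Sᴴ R * fromRows ((z • E - A)⁻¹ * B) 1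

/-- Interpret a complex matrix as a matrix of rational functions. -/
def mapRat {a b : Type} (M : Matrix a b ℂ) : Matrix a b (RatFunc ℂ) :=
  M.map ⇑(algebraMap ℂ (RatFunc ℂ))

/-- The Popov function as an `m × m` matrix over the field `ℂ(z)`. -/
def popov {n m : ℕ} (E A : Matrix (Fin n) (Fin n) ℂ) (B : Matrix (Fin n) (Fin m) ℂ)
    (Q : Matrix (Fin n) (Fin n) ℂ) (S : Matrix (Fin n) (Fin m) ℂ)
    (R : Matrix (Fin m) (Fin m) ℂ) : Matrix (Fin m) (Fin m) (RatFunc ℂ) :=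
  mapRat Bᴴ * ((RatFunc.X : RatFunc ℂ)⁻¹ • mapRat Eᴴ - mapRat Aᴴ)⁻¹ * mapRat Q *
      ((RatFunc.X : RatFunc ℂ) • mapRat E - mapRat A)⁻¹ * mapRat B +
    mapRat Bᴴ * ((RatFunc.X : RatFunc ℂ)⁻¹ • mapRat Eᴴ - mapRat Aᴴ)⁻¹ * mapRat S +
    mapRat Sᴴ * ((RatFunc.X : RatFunc ℂ) • mapRat E - mapRat A)⁻¹ * mapRat B +
    mapRat R

/-- A subspace `𝒴` is `N`-neutral if `x^* N y = 0` for all `x, y ∈ 𝒴`. -/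
def IsNeutral {k : Type} [Fintype k] (N : Matrix k k ℂ) (Y : Submodule ℂ (k → ℂ)) : Prop :=
  ∀ x ∈ Y, ∀ y ∈ Y, star x ⬝ᵥ (N *ᵥ y) = 0

/-- A subspace is maximally `N`-neutral if it is `N`-neutral and no strictly larger
subspace is `N`-neutral. -/
def IsMaxNeutral {k : Type} [Fintype k] (N : Matrix k k ℂ) (Y : Submodule ℂ (k → ℂ)) : Prop :=
  IsNeutral N Y ∧ ∀ W : Submodule ℂ (k → ℂ), Y < W → ¬ IsNeutral N W

theorem isBehavior_geometric {n m : ℕ} {E A : Matrix (Fin n) (Fin n) ℂ} {B : Matrix (Fin n) (Fin m) ℂ}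
    {lam : ℂ} {x₀ : Fin n → ℂ} {u : Fin m → ℂ} (h : (lam • E - A) *ᵥ x₀ = B *ᵥ u) :
    IsBehavior E A B (fun j => lam ^ j • x₀) (fun j => lam ^ j • u) := by
  have hstep : lam • (E *ᵥ x₀) = A *ᵥ x₀ + B *ᵥ u := by
    rw [← h, sub_mulVec, smul_mulVec]
    abel
  intro j
  simp only [mulVec_smul]
  rw [pow_succ', mul_smul, smul_comm lam, hstep, smul_add]

theorem mem_systemSpace_of_isBehavior {n m : ℕ} {E A : Matrix (Fin n) (Fin n) ℂ}
    {B : Matrix (Fin n) (Fin m) ℂ} {x : ℕ → Fin n → ℂ} {u : ℕ → Fin m → ℂ}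
    (h : IsBehavior E A B x u) (j : ℕ) : Sum.elim (x j) (u j) ∈ systemSpace E A B :=
  Submodule.subset_span ⟨x, u, h, j, rfl⟩

theorem stmt_1_general {n m : ℕ} (E A : Matrix (Fin n) (Fin n) ℂ) (B : Matrix (Fin n) (Fin m) ℂ)
    (lam : ℂ) (hlam : (lam • E - A).det ≠ 0) :
    ∀ u : Fin m → ℂ,
      Sum.elim ((lam • E - A)⁻¹ *ᵥ (B *ᵥ u)) u ∈ systemSpace E A B := by
  intro u
  have hx₀ : (lam • E - A) *ᵥ ((lam • E - A)⁻¹ *ᵥ (B *ᵥ u)) = B *ᵥ u := by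
    rw [mulVec_mulVec, mul_nonsing_inv _ (isUnit_iff_ne_zero.mpr hlam), one_mulVec]
  simpa using mem_systemSpace_of_isBehavior (isBehavior_geometric hx₀) 0

/-- for `λ` with `det(λE − A) ≠ 0`, the stacked vector
`((λE−A)⁻¹ B u ; u)` belongs to the system space. -/
theorem stmt_1 {n m : ℕ} (E A : Matrix (Fin n) (Fin n) ℂ) (B : Matrix (Fin n) (Fin m) ℂ)
    (hreg : RegularPencil E A) (lam : ℂ) (hlam : (lam • E - A).det ≠ 0) :
    ∀ u : Fin m → ℂ,
      Sum.elim ((lam • E - A)⁻¹ *ᵥ (B *ᵥ u)) u ∈ systemSpace E A B :=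
  stmt_1_general E A B lam hlam
end
end

section
/- Let (E,A,B) be an IDE system with output matrices C ∈ ℂ^{q×n}, D ∈ ℂ^{q×m}, zero dynamics ZD, consistent initial set V^{ZD}, and R(z) := [[zE−A, −B],[C, D]] ∈ ℂ[z]^{(n+q)×(n+m)}. Then the following are equivalent: (i) for every x⁰ ∈ V^{ZD} there exists (x,u) ∈ ZD with Ex₀ = Ex⁰ and lim_{j→∞}(x_j,u_j) = 0 (i.e. the zero dynamics is stabilizable); (ii) the rank of R(z) as a matrix over the field ℂ(z) of rational functions equals the rank of the complex matrix R(λ) for every λ ∈ ℂ with |λ| ≥ 1. -/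
/-!
Over the principal ideal domain `ℂ[z]` the pencil factors as `R(z) = U Δ V` with `U`, `V`
invertible and `Δ = [0 | diag(d₁, …, d_r)]`, the `d_t ≠ 0` sitting in distinct rows. Hence
`rank_{ℂ(z)} R = r` and `rank R(λ) = #{t | d_t(λ) ≠ 0}`, so (ii) says that no `d_t` has a root
with `|λ| ≥ 1`.

Reading `z` as the forward shift `σ`, a trajectory `w = (x, u)` lies in the zero dynamics iff
`v = V(σ) w` satisfies `d_t(σ) v_t = 0` on the constrained components, the other components being
free. If all roots of the `d_t` lie in the open unit disc, the constrained components decay;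
cutting the free ones off after finitely many steps and mapping back by `V(σ)⁻¹` gives a decaying
trajectory with the same initial value. Conversely, a root `λ` of `d_t` with `|λ| ≥ 1` yields the
trajectory `V(σ)⁻¹ (λ^j e_t)`. A trajectory with `E x₀ = 0` can be delayed arbitrarily, so its
constrained components have arbitrarily many initial zeros and vanish; hence every trajectory with
the same `E x₀` keeps the non-decaying component `λ^j`.
-/

open Matrix Filter
open scoped ComplexOrder

set_option synthInstance.maxHeartbeats 1000000
set_option maxHeartbeats 1000000

noncomputable section

/-- The zero dynamics of the system `(E,A,B,C,D)`. -/
def IsZeroDyn {n m q : ℕ} (E A : Matrix (Fin n) (Fin n) ℂ) (B : Matrix (Fin n) (Fin m) ℂ)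
    (C : Matrix (Fin q) (Fin n) ℂ) (D : Matrix (Fin q) (Fin m) ℂ)
    (x : ℕ → Fin n → ℂ) (u : ℕ → Fin m → ℂ) : Prop :=
  ∀ j : ℕ, E *ᵥ x (j + 1) = A *ᵥ x j + B *ᵥ u j ∧ C *ᵥ x j + D *ᵥ u j = 0

/-- `R(z) = [[zE−A, −B],[C, D]]` as a matrix over the field `ℂ(z)`. -/
def Rrat {n m q : ℕ} (E A : Matrix (Fin n) (Fin n) ℂ) (B : Matrix (Fin n) (Fin m) ℂ)
    (C : Matrix (Fin q) (Fin n) ℂ) (D : Matrix (Fin q) (Fin m) ℂ) :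
    Matrix (Fin n ⊕ Fin q) (Fin n ⊕ Fin m) (RatFunc ℂ) :=
  fromBlocks ((RatFunc.X : RatFunc ℂ) • mapRat E - mapRat A) (-(mapRat B)) (mapRat C) (mapRat D)

open Polynomial

section DifferenceOperator

variable {R : Type*} [CommRing R]

def diffOp : R[X] →ₐ[R] Module.End R (ℕ → R) :=
  aeval (LinearMap.funLeft R R (· + 1))

lemma diffOp_apply (p : R[X]) (y : ℕ → R) (j : ℕ) :
    diffOp p y j = ∑ k ∈ Finset.range (p.natDegree + 1), p.coeff k * y (j + k) := by
  have shift_pow (k : ℕ) (y : ℕ → R) : (LinearMap.funLeft R R (· + 1) ^ k) y j = y (j + k) := by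
    induction k generalizing y with
    | zero => rfl
    | succ k ih => rw [pow_succ, Module.End.mul_apply, ih]; rfl
  simp [diffOp, aeval_eq_sum_range, shift_pow]

@[simp] lemma diffOp_C (c : R) (y : ℕ → R) : diffOp (C c) y = c • y := by
  simp [diffOp]

@[simp] lemma diffOp_X (y : ℕ → R) (j : ℕ) : diffOp X y j = y (j + 1) := by
  simp [diffOp]

lemma diffOp_geom (p : R[X]) (c l : R) :
    diffOp p (fun j => c * l ^ j) = fun j => p.eval l * c * l ^ j := by
  funext j
  simp only [diffOp_apply, eval_eq_sum_range, Finset.sum_mul, pow_add]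
  exact Finset.sum_congr rfl fun k _ => by ring

lemma diffOp_apply_congr (p : R[X]) {y z : ℕ → R} {j : ℕ}
    (h : ∀ k ≤ j + p.natDegree, y k = z k) : diffOp p y j = diffOp p z j := by
  simp only [diffOp_apply]
  exact Finset.sum_congr rfl fun k hk => by
    rw [h _ (by simp at hk; omega)]

lemma eq_zero_of_diffOp_eq_zero [NoZeroDivisors R] {p : R[X]} (hp : p ≠ 0) {y : ℕ → R}
    (hy : diffOp p y = 0) (h0 : ∀ j < p.natDegree, y j = 0) (j : ℕ) : y j = 0 := by
  induction j using Nat.strong_induction_on with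
  | _ j ih =>
    obtain hj | hj := lt_or_ge j p.natDegree
    · exact h0 j hj
    have hrec := congrFun hy (j - p.natDegree)
    rw [diffOp_apply, Finset.sum_range_succ, Finset.sum_eq_zero fun k hk => by
      rw [ih _ (by simp at hk; omega), mul_zero], zero_add, Nat.sub_add_cancel hj] at hrec
    exact (mul_eq_zero.mp hrec).resolve_left (leadingCoeff_ne_zero.mpr hp)

def delay {M : Type*} [Zero M] (K : ℕ) (y : ℕ → M) : ℕ → M :=
  fun j => if j < K then 0 else y (j - K)

lemma diffOp_delay_add (p : R[X]) (y : ℕ → R) (K j : ℕ) :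
    diffOp p (delay K y) (K + j) = diffOp p y j := by
  simp only [diffOp_apply, delay]
  exact Finset.sum_congr rfl fun k _ => by
    rw [if_neg (by omega), show K + j + k - K = j + k by omega]

end DifferenceOperator

section MatrixDifferenceOperator

variable {R : Type*} [CommRing R] {ι κ : Type*} [Fintype ι]

def matDiffOp (M : Matrix κ ι R[X]) : (ι → ℕ → R) →ₗ[R] (κ → ℕ → R) :=
  LinearMap.pi fun i => ∑ s, diffOp (M i s) ∘ₗ LinearMap.proj s

lemma matDiffOp_apply (M : Matrix κ ι R[X]) (w : ι → ℕ → R) (i : κ) :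
    matDiffOp M w i = ∑ s, diffOp (M i s) (w s) := by
  simp [matDiffOp]

lemma matDiffOp_mul {τ : Type*} [Fintype τ] (M : Matrix κ ι R[X]) (N : Matrix ι τ R[X])
    (w : τ → ℕ → R) : matDiffOp (M * N) w = matDiffOp M (matDiffOp N w) := by
  funext i
  simp only [matDiffOp_apply, Matrix.mul_apply, map_sum, map_mul, LinearMap.sum_apply,
    Module.End.mul_apply]
  exact Finset.sum_comm

lemma matDiffOp_one [DecidableEq ι] (w : ι → ℕ → R) : matDiffOp (1 : Matrix ι ι R[X]) w = w := by
  funext i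
  rw [matDiffOp_apply, Finset.sum_eq_single i (fun s _ hs => by simp [Matrix.one_apply_ne' hs])
    (by simp)]
  simp

def matDeg [Fintype κ] (M : Matrix κ ι R[X]) : ℕ :=
  Finset.univ.sup fun p : κ × ι => (M p.1 p.2).natDegree

lemma natDegree_le_matDeg [Fintype κ] (M : Matrix κ ι R[X]) (i : κ) (s : ι) :
    (M i s).natDegree ≤ matDeg M :=
  Finset.le_sup (f := fun p : κ × ι => (M p.1 p.2).natDegree) (Finset.mem_univ (i, s))

lemma matDiffOp_apply_congr [Fintype κ] (M : Matrix κ ι R[X]) {w w' : ι → ℕ → R} {j : ℕ}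
    (h : ∀ s, ∀ k ≤ j + matDeg M, w s k = w' s k) (i : κ) :
    matDiffOp M w i j = matDiffOp M w' i j := by
  simp only [matDiffOp_apply, Finset.sum_apply]
  exact Finset.sum_congr rfl fun s _ => diffOp_apply_congr _ fun k hk =>
    h s k (by have := natDegree_le_matDeg M i s; omega)

lemma matDiffOp_delay_add (M : Matrix κ ι R[X]) (w : ι → ℕ → R) (K j : ℕ) (i : κ) :
    matDiffOp M (fun s => delay K (w s)) i (K + j) = matDiffOp M w i j := by
  simp only [matDiffOp_apply, Finset.sum_apply, diffOp_delay_add]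

lemma matDiffOp_delay_of_lt [Fintype κ] (M : Matrix κ ι R[X]) (w : ι → ℕ → R) {K j : ℕ}
    (h : j + matDeg M < K) (i : κ) : matDiffOp M (fun s => delay K (w s)) i j = 0 := by
  rw [matDiffOp_apply_congr M (w := fun s => delay K (w s)) (w' := 0)
    (fun s k hk => if_pos (by omega)) i, map_zero]
  rfl

end MatrixDifferenceOperator

section Asymptotics

open Topology

lemma tendsto_zero_of_recurrence {𝕜 E : Type*} [NormedField 𝕜] [SeminormedAddCommGroup E]
    [NormedSpace 𝕜 E] {l : 𝕜} (hl : ‖l‖ < 1) {y z : ℕ → E} (hz : Tendsto z atTop (𝓝 0))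
    (hrec : ∀ j, y (j + 1) = l • y j + z j) : Tendsto y atTop (𝓝 0) := by
  rw [NormedAddGroup.tendsto_nhds_zero] at hz ⊢
  intro ε hε
  obtain ⟨N, hN⟩ := eventually_atTop.mp (hz (ε / 2 * (1 - ‖l‖)) (by nlinarith [norm_nonneg l]))
  -- once `‖z‖ ≤ (ε/2)(1 - ‖l‖)`, the excess of `‖y‖` over `ε/2` contracts by the factor `‖l‖`
  have hbound : ∀ t, ‖y (t + N)‖ ≤ ε / 2 + ‖l‖ ^ t * ‖y N‖ := by
    intro t
    induction t with
    | zero => simpa using (half_pos hε).le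
    | succ t ih =>
      calc ‖y (t + 1 + N)‖ ≤ ‖l‖ * ‖y (t + N)‖ + ‖z (t + N)‖ := by
            rw [add_right_comm, hrec, ← norm_smul]; exact norm_add_le _ _
        _ ≤ ‖l‖ * (ε / 2 + ‖l‖ ^ t * ‖y N‖) + ε / 2 * (1 - ‖l‖) := by
            gcongr
            exact (hN _ (by omega)).le
        _ = ε / 2 + ‖l‖ ^ (t + 1) * ‖y N‖ := by ring
  have hgeom : Tendsto (fun t => ‖l‖ ^ t * ‖y N‖) atTop (𝓝 0) := by
    simpa using (tendsto_pow_atTop_nhds_zero_of_lt_one (norm_nonneg l) hl).mul_const ‖y N‖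
  obtain ⟨T, hT⟩ := eventually_atTop.mp (hgeom.eventually (gt_mem_nhds (half_pos hε)))
  refine eventually_atTop.mpr ⟨T + N, fun j hj => ?_⟩
  have hj' := hbound (j - N)
  rw [Nat.sub_add_cancel (by omega)] at hj'
  linarith [hT (j - N) (by omega)]

lemma tendsto_diffOp_zero {R : Type*} [CommRing R] [TopologicalSpace R] [IsTopologicalRing R]
    (p : R[X]) {y : ℕ → R} (hy : Tendsto y atTop (𝓝 0)) :
    Tendsto (diffOp p y) atTop (𝓝 0) := by
  simp_rw [funext (diffOp_apply p y)]
  simpa using tendsto_finsetSum _ fun k _ =>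
    ((tendsto_add_atTop_iff_nat k).mpr hy).const_mul (p.coeff k)

lemma tendsto_matDiffOp_zero {R : Type*} [CommRing R] [TopologicalSpace R] [IsTopologicalRing R]
    {ι κ : Type*} [Fintype ι] (M : Matrix κ ι R[X]) {w : ι → ℕ → R}
    (hw : ∀ s, Tendsto (w s) atTop (𝓝 0)) (i : κ) :
    Tendsto (matDiffOp M w i) atTop (𝓝 0) := by
  rw [matDiffOp_apply, Finset.sum_fn]
  simpa using tendsto_finsetSum Finset.univ fun s _ => tendsto_diffOp_zero (M i s) (hw s)

lemma tendsto_zero_of_diffOp_eq_zero {𝕜 : Type*} [NormedField 𝕜] [IsAlgClosed 𝕜] {p : 𝕜[X]}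
    (hp : p ≠ 0) (hroots : ∀ μ, p.IsRoot μ → ‖μ‖ < 1) {y : ℕ → 𝕜} (hy : diffOp p y = 0) :
    Tendsto y atTop (𝓝 0) := by
  have hprod : ∀ s : Multiset 𝕜, (∀ μ ∈ s, ‖μ‖ < 1) → ∀ y : ℕ → 𝕜,
      diffOp (s.map fun μ => X - C μ).prod y = 0 → Tendsto y atTop (𝓝 0) := by
    intro s
    induction s using Multiset.induction_on with
    | empty =>
      intro _ y hy
      simp only [Multiset.map_zero, Multiset.prod_zero, map_one, Module.End.one_apply] at hy
      exact hy ▸ tendsto_const_nhds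
    | cons μ s ih =>
      intro hs y hy
      rw [Multiset.map_cons, Multiset.prod_cons, mul_comm, map_mul, Module.End.mul_apply] at hy
      refine tendsto_zero_of_recurrence (hs μ (Multiset.mem_cons_self μ s))
        (ih (fun ν hν => hs ν (Multiset.mem_cons_of_mem hν)) _ hy) fun j => ?_
      simp [smul_eq_mul]
  rw [← C_leadingCoeff_mul_prod_multiset_X_sub_C (IsAlgClosed.card_roots_eq_natDegree (p := p)),
    map_mul, Module.End.mul_apply, diffOp_C, smul_eq_zero] at hy
  exact hprod _ (fun μ hμ => hroots μ (isRoot_of_mem_roots hμ)) y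
    (hy.resolve_left (leadingCoeff_ne_zero.mpr hp))

end Asymptotics

namespace Matrix

variable {R : Type*} [CommRing R] [StrongRankCondition R] {l m n : Type*} [Fintype n]

lemma rank_mul_eq_right_of_mul_eq_one [Fintype l] [Fintype m] [DecidableEq m]
    {U : Matrix l m R} {U' : Matrix m l R} (hU : U' * U = 1) (M : Matrix m n R) :
    (U * M).rank = M.rank :=
  le_antisymm (rank_mul_le_right U M) <| by
    simpa [← Matrix.mul_assoc, hU] using rank_mul_le_right U' (U * M)

lemma rank_mul_eq_left_of_mul_eq_one [Fintype l] [DecidableEq n] {V : Matrix n l R}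
    {V' : Matrix l n R} (hV : V * V' = 1) (M : Matrix m n R) : (M * V).rank = M.rank :=
  le_antisymm (rank_mul_le_left M V) <| by
    simpa [Matrix.mul_assoc, hV] using rank_mul_le_left (M * V) V'

end Matrix

section SmithDiag

variable {R : Type*} [CommRing R] {α : Type*} [DecidableEq α]

def smithDiag (k : ℕ) {r : ℕ} (f : Fin r ↪ α) (d : Fin r → R) : Matrix α (Fin k ⊕ Fin r) R :=
  Matrix.of fun i => Sum.elim 0 fun t => if i = f t then d t else 0

lemma smithDiag_eq_mul (k : ℕ) {r : ℕ} (f : Fin r ↪ α) (d : Fin r → R) :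
    smithDiag k f d = Matrix.of (fun i t => if i = f t then (1 : R) else 0) * Matrix.diagonal d *
      Matrix.fromCols (0 : Matrix (Fin r) (Fin k) R) 1 := by
  refine Matrix.ext fun i s => ?_
  cases s <;> simp [smithDiag, Matrix.mul_diagonal]

lemma rank_smithDiag [Fintype α] {K : Type*} [Field K] [DecidableEq K] (k : ℕ) {r : ℕ}
    (f : Fin r ↪ α) (d : Fin r → K) :
    (smithDiag k f d).rank = Fintype.card {t // d t ≠ 0} := by
  have hleft : Matrix.of (fun t i => if i = f t then (1 : K) else 0) *
      Matrix.of (fun i t => if i = f t then (1 : K) else 0) = 1 := by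
    refine Matrix.ext fun t t' => ?_
    simp [Matrix.mul_apply, Matrix.one_apply, eq_comm]
  have hright : Matrix.fromCols (0 : Matrix (Fin r) (Fin k) K) (1 : Matrix (Fin r) (Fin r) K) *
      Matrix.fromRows (0 : Matrix (Fin k) (Fin r) K) (1 : Matrix (Fin r) (Fin r) K) = 1 := by
    simp [Matrix.fromCols_mul_fromRows]
  rw [smithDiag_eq_mul, Matrix.rank_mul_eq_left_of_mul_eq_one hright,
    Matrix.rank_mul_eq_right_of_mul_eq_one hleft, Matrix.rank_diagonal]

lemma smithDiag_map {S : Type*} [CommRing S] (k : ℕ) {r : ℕ} (f : Fin r ↪ α) (d : Fin r → R)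
    (g : R →+* S) : (smithDiag k f d).map g = smithDiag k f (g ∘ d) := by
  refine Matrix.ext fun i s => ?_
  cases s <;> simp [smithDiag, apply_ite g]

lemma matDiffOp_smithDiag_apply (k : ℕ) {r : ℕ} (f : Fin r ↪ α) (d : Fin r → R[X])
    (v : Fin k ⊕ Fin r → ℕ → R) (i : α) :
    matDiffOp (smithDiag k f d) v i = ∑ t, if i = f t then diffOp (d t) (v (.inr t)) else 0 := by
  simp [matDiffOp_apply, smithDiag, apply_ite, ite_apply]

lemma matDiffOp_smithDiag_eq_zero_iff (k : ℕ) {r : ℕ} (f : Fin r ↪ α) (d : Fin r → R[X])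
    (v : Fin k ⊕ Fin r → ℕ → R) :
    matDiffOp (smithDiag k f d) v = 0 ↔ ∀ t, diffOp (d t) (v (.inr t)) = 0 := by
  refine ⟨fun h t => ?_, fun h => funext fun i => ?_⟩
  · have := congrFun h (f t)
    rwa [matDiffOp_smithDiag_apply, Finset.sum_eq_single t (fun t' _ ht' => if_neg
      (f.injective.ne ht'.symm)) (by simp), if_pos rfl] at this
  · simp [matDiffOp_smithDiag_apply, h]

end SmithDiag

section SmithDecomposition

variable {R : Type*} [CommRing R] {α β : Type*} [Fintype α] [Fintype β] [DecidableEq α]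
  [DecidableEq β]

/-- A Smith normal form of `P`, up to the divisibility chain `d₁ ∣ d₂ ∣ ⋯`. -/
structure SmithDecomposition (P : Matrix α β R) where
  k : ℕ
  r : ℕ
  U : Matrix α α R
  Uinv : Matrix α α R
  V : Matrix (Fin k ⊕ Fin r) β R
  Vinv : Matrix β (Fin k ⊕ Fin r) R
  f : Fin r ↪ α
  d : Fin r → R
  Uinv_mul : Uinv * U = 1
  mul_Vinv : V * Vinv = 1
  Vinv_mul : Vinv * V = 1
  d_ne_zero : ∀ t, d t ≠ 0
  eq : P = U * smithDiag k f d * V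

/- Take a Smith basis of the range of `P` and, in the domain, a basis of the kernel together
with lifts of the Smith basis of the range; the lifts exist as the range is free. -/
theorem SmithDecomposition.nonempty [IsDomain R] [IsPrincipalIdealRing R] (P : Matrix α β R) :
    Nonempty (SmithDecomposition P) := by
  set φ := P.mulVecLin
  set ψ := φ.rangeRestrict
  obtain ⟨r, snf⟩ := Submodule.smithNormalForm (Pi.basisFun R α) (LinearMap.range φ)
  obtain ⟨k, bK⟩ := Submodule.basisOfPid (Pi.basisFun R β) (LinearMap.ker ψ)
  have : Module.Free R (LinearMap.range φ) := Module.Free.of_basis snf.bN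
  obtain ⟨sec, hsec⟩ :=
    Module.projective_lifting_property ψ LinearMap.id φ.surjective_rangeRestrict
  let split := (LinearMap.exact_subtype_ker_map ψ).splitSurjectiveEquiv Subtype.val_injective
    ⟨sec, hsec⟩
  let e := split.1
  have hψe : ψ = LinearMap.snd R _ _ ∘ₗ e.toLinearMap := split.2.2
  let bD := (bK.prod snf.bN).map e.symm
  have hφbD (s) : φ (bD s) = Sum.elim (fun _ => 0) (fun t => snf.a t • snf.bM (snf.f t)) s := by
    have hψ (z) : ψ (e.symm z) = z.2 := by simpa using LinearMap.congr_fun hψe (e.symm z)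
    change ((ψ (e.symm ((bK.prod snf.bN) s)) : LinearMap.range φ) : α → R) = _
    rw [hψ]
    cases s with
    | inl a => simp
    | inr t => simpa using snf.snf t
  have hΔ : LinearMap.toMatrix bD snf.bM φ = smithDiag k snf.f snf.a := by
    refine Matrix.ext fun i s => ?_
    rw [LinearMap.toMatrix_apply, hφbD]
    cases s with
    | inl a => simp [smithDiag]
    | inr t => simp [smithDiag, Finsupp.single_apply, eq_comm]
  refine ⟨⟨k, r, (Pi.basisFun R α).toMatrix snf.bM, snf.bM.toMatrix (Pi.basisFun R α),
    bD.toMatrix (Pi.basisFun R β), (Pi.basisFun R β).toMatrix bD, snf.f, snf.a,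
    Module.Basis.toMatrix_mul_toMatrix_flip _ _, Module.Basis.toMatrix_mul_toMatrix_flip _ _,
    Module.Basis.toMatrix_mul_toMatrix_flip _ _, fun t h => ?_, ?_⟩⟩
  · exact snf.bN.ne_zero t (Subtype.ext (by simpa [h] using snf.snf t))
  · rw [← hΔ, basis_toMatrix_mul_linearMap_toMatrix_mul_basis_toMatrix]
    exact (LinearMap.toMatrix'_toLin' P).symm

namespace SmithDecomposition

lemma rank_map {P : Matrix α β R} (S : SmithDecomposition P) {K : Type*} [Field K]
    [DecidableEq K] (g : R →+* K) : (P.map g).rank = Fintype.card {t // g (S.d t) ≠ 0} := by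
  have hU : S.Uinv.map g * S.U.map g = 1 := by
    rw [← Matrix.map_mul, S.Uinv_mul, Matrix.map_one _ (map_zero g) (map_one g)]
  have hV : S.V.map g * S.Vinv.map g = 1 := by
    rw [← Matrix.map_mul, S.mul_Vinv, Matrix.map_one _ (map_zero g) (map_one g)]
  calc (P.map g).rank = ((S.U * smithDiag S.k S.f S.d * S.V).map g).rank := by rw [← S.eq]
    _ = _ := by
      rw [Matrix.map_mul, Matrix.map_mul, Matrix.rank_mul_eq_left_of_mul_eq_one hV,
        Matrix.rank_mul_eq_right_of_mul_eq_one hU, smithDiag_map, rank_smithDiag]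
      rfl

lemma matDiffOp_eq_zero_iff {P : Matrix α β R[X]} (S : SmithDecomposition P) (w : β → ℕ → R) :
    matDiffOp P w = 0 ↔ ∀ t, diffOp (S.d t) (matDiffOp S.V w (.inr t)) = 0 := by
  have hP : matDiffOp P w =
      matDiffOp S.U (matDiffOp (smithDiag S.k S.f S.d) (matDiffOp S.V w)) := by
    rw [← matDiffOp_mul, ← matDiffOp_mul, ← S.eq]
  rw [hP, ← matDiffOp_smithDiag_eq_zero_iff S.k S.f S.d]
  constructor
  · intro h
    have hcancel := congrArg (matDiffOp S.Uinv) h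
    rwa [← matDiffOp_mul, S.Uinv_mul, matDiffOp_one, map_zero] at hcancel
  · intro h
    rw [h, map_zero]

end SmithDecomposition

end SmithDecomposition

section Stacking

variable {ι κ R : Type*}

def stack (x : ℕ → ι → R) (u : ℕ → κ → R) : ι ⊕ κ → ℕ → R :=
  fun s j => Sum.elim (x j) (u j) s

lemma exists_stack_eq (w : ι ⊕ κ → ℕ → R) : ∃ x u, stack x u = w :=
  ⟨fun j i => w (.inl i) j, fun j i => w (.inr i) j, by funext s j; cases s <;> rfl⟩

lemma stack_sub [Sub R] (x x' : ℕ → ι → R) (u u' : ℕ → κ → R) :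
    stack (x - x') (u - u') = stack x u - stack x' u' := by
  funext s j; cases s <;> rfl

lemma stack_delay [Zero R] (K : ℕ) (x : ℕ → ι → R) (u : ℕ → κ → R) :
    stack (delay K x) (delay K u) = fun s => delay K (stack x u s) := by
  funext s j
  cases s <;> by_cases h : j < K <;> simp [stack, delay, h]

lemma tendsto_stack_iff [TopologicalSpace R] [Zero R] (x : ℕ → ι → R) (u : ℕ → κ → R) :
    (∀ s, Tendsto (stack x u s) atTop (nhds 0)) ↔
      Tendsto x atTop (nhds 0) ∧ Tendsto u atTop (nhds 0) := by
  simp only [Sum.forall, tendsto_pi_nhds]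
  rfl

end Stacking

section ZeroDynamics

variable {n m q : ℕ} (E A : Matrix (Fin n) (Fin n) ℂ) (B : Matrix (Fin n) (Fin m) ℂ)
  (C : Matrix (Fin q) (Fin n) ℂ) (D : Matrix (Fin q) (Fin m) ℂ)

def systemPencil : Matrix (Fin n ⊕ Fin q) (Fin n ⊕ Fin m) ℂ[X] :=
  fromBlocks ((X : ℂ[X]) • E.map (Polynomial.C : ℂ →+* ℂ[X]) - A.map Polynomial.C)
    (-B.map Polynomial.C) (C.map Polynomial.C) (D.map Polynomial.C)

lemma systemPencil_map_algebraMap :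
    (systemPencil E A B C D).map (algebraMap ℂ[X] (RatFunc ℂ)) = Rrat E A B C D := by
  refine Matrix.ext fun i s => ?_
  rcases i with i | i <;> rcases s with s | s <;>
    simp [systemPencil, Rrat, mapRat, RatFunc.algebraMap_eq_C]
  exact mul_comm _ _

lemma systemPencil_map_eval (lam : ℂ) :
    (systemPencil E A B C D).map (evalRingHom lam) = fromBlocks (lam • E - A) (-B) C D := by
  refine Matrix.ext fun i s => ?_
  rcases i with i | i <;> rcases s with s | s <;> simp [systemPencil]
  exact mul_comm _ _

lemma matDiffOp_systemPencil_inl (x : ℕ → Fin n → ℂ) (u : ℕ → Fin m → ℂ) (i : Fin n) (j : ℕ) :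
    matDiffOp (systemPencil E A B C D) (stack x u) (.inl i) j =
      (E *ᵥ x (j + 1) - (A *ᵥ x j + B *ᵥ u j)) i := by
  simp [matDiffOp_apply, systemPencil, Fintype.sum_sum_type, stack, Matrix.mulVec, dotProduct,
    Finset.sum_apply, Finset.sum_sub_distrib]
  ring

lemma matDiffOp_systemPencil_inr (x : ℕ → Fin n → ℂ) (u : ℕ → Fin m → ℂ) (i : Fin q) (j : ℕ) :
    matDiffOp (systemPencil E A B C D) (stack x u) (.inr i) j = (C *ᵥ x j + D *ᵥ u j) i := by
  simp [matDiffOp_apply, systemPencil, Fintype.sum_sum_type, stack, Matrix.mulVec, dotProduct,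
    Finset.sum_apply]

lemma isZeroDyn_iff_matDiffOp_eq_zero (x : ℕ → Fin n → ℂ) (u : ℕ → Fin m → ℂ) :
    IsZeroDyn E A B C D x u ↔ matDiffOp (systemPencil E A B C D) (stack x u) = 0 := by
  simp only [IsZeroDyn, funext_iff, Sum.forall, matDiffOp_systemPencil_inl,
    matDiffOp_systemPencil_inr, Pi.zero_apply, Pi.sub_apply, sub_eq_zero, forall_and]
  exact and_congr forall_comm forall_comm

end ZeroDynamics

namespace IsZeroDyn

variable {n m q : ℕ} {E A : Matrix (Fin n) (Fin n) ℂ} {B : Matrix (Fin n) (Fin m) ℂ}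
  {C : Matrix (Fin q) (Fin n) ℂ} {D : Matrix (Fin q) (Fin m) ℂ}
  {x x' : ℕ → Fin n → ℂ} {u u' : ℕ → Fin m → ℂ}

lemma sub (h : IsZeroDyn E A B C D x u) (h' : IsZeroDyn E A B C D x' u') :
    IsZeroDyn E A B C D (x - x') (u - u') := by
  rw [isZeroDyn_iff_matDiffOp_eq_zero] at *
  rw [stack_sub, map_sub, h, h', sub_zero]

lemma delay (h : IsZeroDyn E A B C D x u) (h0 : E *ᵥ x 0 = 0) (K : ℕ) :
    IsZeroDyn E A B C D (delay K x) (delay K u) := by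
  intro j
  rcases lt_trichotomy (j + 1) K with hj | hj | hj
  · simp [_root_.delay, hj, show j < K by omega]
  · simp [_root_.delay, ← hj, h0]
  · simpa [_root_.delay, show ¬j < K by omega, show ¬j + 1 < K by omega,
      show j + 1 - K = j - K + 1 by omega] using h (j - K)

end IsZeroDyn

def IsStabilizableZeroDyn {n m q : ℕ} (E A : Matrix (Fin n) (Fin n) ℂ)
    (B : Matrix (Fin n) (Fin m) ℂ) (C : Matrix (Fin q) (Fin n) ℂ) (D : Matrix (Fin q) (Fin m) ℂ) :
    Prop :=
  ∀ x0 : Fin n → ℂ, (∃ x u, IsZeroDyn E A B C D x u ∧ E *ᵥ x 0 = E *ᵥ x0) →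
    ∃ x u, IsZeroDyn E A B C D x u ∧ E *ᵥ x 0 = E *ᵥ x0 ∧
      Tendsto x atTop (nhds 0) ∧ Tendsto u atTop (nhds 0)

namespace SmithDecomposition

variable {n m q : ℕ} {E A : Matrix (Fin n) (Fin n) ℂ} {B : Matrix (Fin n) (Fin m) ℂ}
  {C : Matrix (Fin q) (Fin n) ℂ} {D : Matrix (Fin q) (Fin m) ℂ}
  (S : SmithDecomposition (systemPencil E A B C D)) {x : ℕ → Fin n → ℂ} {u : ℕ → Fin m → ℂ}

lemma isZeroDyn_iff : IsZeroDyn E A B C D x u ↔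
    ∀ t, diffOp (S.d t) (matDiffOp S.V (stack x u) (.inr t)) = 0 :=
  (isZeroDyn_iff_matDiffOp_eq_zero E A B C D x u).trans (S.matDiffOp_eq_zero_iff _)

lemma matDiffOp_V_inr_eq_zero (h : IsZeroDyn E A B C D x u) (h0 : E *ᵥ x 0 = 0) (t : Fin S.r) :
    matDiffOp S.V (stack x u) (.inr t) = 0 := by
  set K := matDeg S.V + (S.d t).natDegree
  have hdelayed := S.isZeroDyn_iff.mp (h.delay h0 K) t
  rw [stack_delay] at hdelayed
  have hzero := eq_zero_of_diffOp_eq_zero (S.d_ne_zero t) hdelayed fun j hj =>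
    matDiffOp_delay_of_lt S.V _ (by omega) _
  funext j
  rw [← matDiffOp_delay_add, hzero]
  rfl

lemma exists_stable_of_eval_ne_zero (hd : ∀ t μ, 1 ≤ ‖μ‖ → (S.d t).eval μ ≠ 0)
    (h : IsZeroDyn E A B C D x u) :
    ∃ x' u', IsZeroDyn E A B C D x' u' ∧ x' 0 = x 0 ∧
      Tendsto x' atTop (nhds 0) ∧ Tendsto u' atTop (nhds 0) := by
  classical
  set v := matDiffOp S.V (stack x u)
  -- cutting the free components of `v` off beyond the look-ahead of `S.Vinv` keeps the value at 0
  set v' : Fin S.k ⊕ Fin S.r → ℕ → ℂ :=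
    Sum.elim (fun a => (Set.Iic (matDeg S.Vinv)).indicator (v (.inl a))) (fun t => v (.inr t))
  obtain ⟨x', u', hw'⟩ := exists_stack_eq (matDiffOp S.Vinv v')
  have hVw' : matDiffOp S.V (stack x' u') = v' := by
    rw [hw', ← matDiffOp_mul, S.mul_Vinv, matDiffOp_one]
  refine ⟨x', u', S.isZeroDyn_iff.mpr fun t => ?_, funext fun i => ?_, ?_⟩
  · rw [hVw']
    exact S.isZeroDyn_iff.mp h t
  · have hv : matDiffOp S.Vinv v = stack x u := by
      rw [← matDiffOp_mul, S.Vinv_mul, matDiffOp_one]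
    have hagree := matDiffOp_apply_congr S.Vinv (w := v') (w' := v) (j := 0) (fun s k hk => ?_)
      (.inl i)
    · rwa [← hw', hv] at hagree
    · rcases s with a | t
      · simp [v', show k ≤ matDeg S.Vinv by omega]
      · rfl
  · rw [← tendsto_stack_iff, hw']
    refine tendsto_matDiffOp_zero _ fun s => ?_
    cases s with
    | inl a =>
      refine tendsto_const_nhds.congr' (eventually_atTop.mpr ⟨matDeg S.Vinv + 1, fun j hj => ?_⟩)
      simp [v', Set.indicator_of_notMem (show j ∉ Set.Iic (matDeg S.Vinv) by simp; omega)]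
    | inr t =>
      exact tendsto_zero_of_diffOp_eq_zero (S.d_ne_zero t)
        (fun μ hμ => not_le.mp fun h1 => hd t μ h1 hμ) (S.isZeroDyn_iff.mp h t)

lemma eval_ne_zero_of_isStabilizableZeroDyn (hstab : IsStabilizableZeroDyn E A B C D)
    (t : Fin S.r) {μ : ℂ} (hμ : 1 ≤ ‖μ‖) : (S.d t).eval μ ≠ 0 := by
  classical
  intro hroot
  set g : Fin S.k ⊕ Fin S.r → ℕ → ℂ := Pi.single (.inr t) fun j => μ ^ j
  obtain ⟨x, u, hw⟩ := exists_stack_eq (matDiffOp S.Vinv g)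
  have hVw : matDiffOp S.V (stack x u) = g := by
    rw [hw, ← matDiffOp_mul, S.mul_Vinv, matDiffOp_one]
  have hzd : IsZeroDyn E A B C D x u := S.isZeroDyn_iff.mpr fun t' => by
    rw [hVw]
    by_cases ht : t' = t
    · subst ht
      funext j
      simpa [g, hroot] using congrFun (diffOp_geom (S.d t') 1 μ) j
    · simp [g, ht]
  obtain ⟨x', u', hzd', hx0', hx', hu'⟩ := hstab (x 0) ⟨x, u, hzd, rfl⟩
  have hdiff := S.matDiffOp_V_inr_eq_zero (hzd'.sub hzd) (by simp [Matrix.mulVec_sub, hx0']) t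
  rw [stack_sub, map_sub, hVw, Pi.sub_apply, sub_eq_zero] at hdiff
  have hdecay := tendsto_matDiffOp_zero S.V ((tendsto_stack_iff x' u').mpr ⟨hx', hu'⟩) (.inr t)
  rw [hdiff] at hdecay
  exact not_lt.mpr hμ (tendsto_pow_atTop_nhds_zero_iff_norm_lt_one.mp (by simpa [g] using hdecay))

lemma isStabilizableZeroDyn_iff :
    IsStabilizableZeroDyn E A B C D ↔ ∀ t μ, 1 ≤ ‖μ‖ → (S.d t).eval μ ≠ 0 := by
  refine ⟨fun h t μ hμ => S.eval_ne_zero_of_isStabilizableZeroDyn h t hμ, ?_⟩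
  rintro hd x0 ⟨x, u, hzd, hx0⟩
  obtain ⟨x', u', hzd', hx0', hx', hu'⟩ := S.exists_stable_of_eval_ne_zero hd hzd
  exact ⟨x', u', hzd', hx0' ▸ hx0, hx', hu'⟩

lemma rank_Rrat_eq_rank_iff (lam : ℂ) :
    (Rrat E A B C D).rank = (fromBlocks (lam • E - A) (-B) C D).rank ↔
      ∀ t, (S.d t).eval lam ≠ 0 := by
  classical
  have hne (t : Fin S.r) : algebraMap ℂ[X] (RatFunc ℂ) (S.d t) ≠ 0 :=
    (map_ne_zero_iff _ (IsFractionRing.injective _ _)).mpr (S.d_ne_zero t)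
  rw [← systemPencil_map_algebraMap, ← systemPencil_map_eval, S.rank_map, S.rank_map,
    Fintype.card_subtype, Fintype.card_subtype, Finset.filter_true_of_mem fun t _ => hne t,
    eq_comm, Finset.card_filter_eq_iff]
  simp

end SmithDecomposition

theorem stmt_2_general {n m q : ℕ} (E A : Matrix (Fin n) (Fin n) ℂ) (B : Matrix (Fin n) (Fin m) ℂ)
    (C : Matrix (Fin q) (Fin n) ℂ) (D : Matrix (Fin q) (Fin m) ℂ) :
    ((∀ x0 : Fin n → ℂ, (∃ x u, IsZeroDyn E A B C D x u ∧ E *ᵥ x 0 = E *ᵥ x0) →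
        ∃ x u, IsZeroDyn E A B C D x u ∧ E *ᵥ x 0 = E *ᵥ x0 ∧
          Tendsto x atTop (nhds 0) ∧ Tendsto u atTop (nhds 0)) ↔
      ∀ lam : ℂ, 1 ≤ ‖lam‖ →
        (Rrat E A B C D).rank = (fromBlocks (lam • E - A) (-B) C D).rank) := by
  obtain ⟨S⟩ := SmithDecomposition.nonempty (systemPencil E A B C D)
  change IsStabilizableZeroDyn E A B C D ↔ _
  simp_rw [S.isStabilizableZeroDyn_iff, S.rank_Rrat_eq_rank_iff]
  exact ⟨fun h μ hμ t => h t μ hμ, fun h t μ hμ => h μ hμ t⟩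

/-- the zero dynamics is stabilizable iff the rank of `R(z)` over `ℂ(z)`
equals the rank of `R(λ)` for every `λ` with `|λ| ≥ 1`. -/
theorem stmt_2 {n m q : ℕ} (E A : Matrix (Fin n) (Fin n) ℂ) (B : Matrix (Fin n) (Fin m) ℂ)
    (C : Matrix (Fin q) (Fin n) ℂ) (D : Matrix (Fin q) (Fin m) ℂ)
    (hreg : RegularPencil E A) :
    ((∀ x0 : Fin n → ℂ, (∃ x u, IsZeroDyn E A B C D x u ∧ E *ᵥ x 0 = E *ᵥ x0) →
        ∃ x u, IsZeroDyn E A B C D x u ∧ E *ᵥ x 0 = E *ᵥ x0 ∧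
          Tendsto x atTop (nhds 0) ∧ Tendsto u atTop (nhds 0)) ↔
      ∀ lam : ℂ, 1 ≤ ‖lam‖ →
        (Rrat E A B C D).rank = (fromBlocks (lam • E - A) (-B) C D).rank) :=
  stmt_2_general E A B C D
end
end

section
/- Let (E,A,B,Q,S,R) be a weighted system, let W, T ∈ ℂ^{n×n} be invertible and F ∈ ℂ^{m×n}, and define E_F := WET, A_F := W(A+BF)T, B_F := WB, Q_F := T^*(Q + SF + F^*S^* + F^*RF)T, S_F := T^*(S + F^*R), R_F := R, and 𝒯_F := [[T, 0],[FT, I_m]]. Let P ∈ ℂ^{n×n} be Hermitian and P_F := W^{−*} P W^{−1}. Then M_F(P_F) = 𝒯_F^* M(P) 𝒯_F, where M(·) and M_F(·) denote the KYP matrices of the weighted systems (E,A,B,Q,S,R) and (E_F,A_F,B_F,Q_F,S_F,R_F), respectively. -/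
open Matrix Filter
open scoped ComplexOrder

set_option synthInstance.maxHeartbeats 1000000
set_option maxHeartbeats 1000000

noncomputable section

/-! Writing `M(P) = [A B]ᴴ P [A B] - [E 0]ᴴ P [E 0] + [[Q, S], [Sᴴ, R]]`, the feedback
system has `[A_F B_F] = W [A B] 𝒯_F` and `[E_F 0] = W [E 0] 𝒯_F`; the factors `W` are absorbed
by `P_F = W⁻ᴴ P W⁻¹`, and the weight matrix of the feedback system is
`𝒯_Fᴴ [[Q, S], [Sᴴ, R]] 𝒯_F`. -/

namespace Matrix

lemma conjTranspose_mul_mul_mul_of_isUnit {α ι κ μ : Type*} [CommRing α] [StarRing α]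
    [Fintype ι] [DecidableEq ι] {W : Matrix ι ι α} (hW : IsUnit W) (P : Matrix ι ι α)
    (X : Matrix ι κ α) (Y : Matrix ι μ α) :
    (W * X)ᴴ * ((W⁻¹)ᴴ * P * W⁻¹) * (W * Y) = Xᴴ * P * Y := by
  have hinv : W⁻¹ * W = 1 := nonsing_inv_mul W ((isUnit_iff_isUnit_det W).mp hW)
  calc (W * X)ᴴ * ((W⁻¹)ᴴ * P * W⁻¹) * (W * Y)
      = Xᴴ * (W⁻¹ * W)ᴴ * P * (W⁻¹ * W) * Y := by
        simp only [conjTranspose_mul, Matrix.mul_assoc]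
    _ = Xᴴ * P * Y := by simp [hinv]

variable {α ι κ μ : Type*} [Semiring α] [Fintype κ] [Fintype μ] [DecidableEq μ]

lemma fromCols_mul_fromBlocks_feedback (A : Matrix ι κ α) (B : Matrix ι μ α)
    (T : Matrix κ κ α) (F : Matrix μ κ α) :
    fromCols A B * fromBlocks T 0 (F * T) 1 = fromCols ((A + B * F) * T) B := by
  simp [fromCols_mul_fromBlocks, Matrix.add_mul, Matrix.mul_assoc]

lemma conjTranspose_fromBlocks_feedback_mul_mul [StarRing α] (Q : Matrix κ κ α)
    (S : Matrix κ μ α) {R : Matrix μ μ α} (hR : R.IsHermitian) (T : Matrix κ κ α)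
    (F : Matrix μ κ α) :
    (fromBlocks T 0 (F * T) 1)ᴴ * fromBlocks Q S Sᴴ R * fromBlocks T 0 (F * T) 1
      = fromBlocks (Tᴴ * (Q + S * F + Fᴴ * Sᴴ + Fᴴ * R * F) * T) (Tᴴ * (S + Fᴴ * R))
          (Tᴴ * (S + Fᴴ * R))ᴴ R := by
  simp only [fromBlocks_conjTranspose, fromBlocks_multiply, conjTranspose_mul,
    conjTranspose_add, conjTranspose_conjTranspose, hR.eq, conjTranspose_zero,
    conjTranspose_one, Matrix.mul_add, Matrix.add_mul, Matrix.mul_assoc, Matrix.zero_mul,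
    Matrix.mul_zero, Matrix.one_mul, Matrix.mul_one, zero_add]
  congr 1
  abel

end Matrix

lemma kypM_eq_sub_add {n m : ℕ} (E A : Matrix (Fin n) (Fin n) ℂ)
    (B : Matrix (Fin n) (Fin m) ℂ)
    (Q : Matrix (Fin n) (Fin n) ℂ) (S : Matrix (Fin n) (Fin m) ℂ)
    (R : Matrix (Fin m) (Fin m) ℂ) (P : Matrix (Fin n) (Fin n) ℂ) :
    kypM E A B Q S R P = (fromCols A B)ᴴ * P * fromCols A B
      - (fromCols E 0)ᴴ * P * fromCols E 0 + fromBlocks Q S Sᴴ R := by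
  rw [Matrix.mul_assoc, Matrix.mul_assoc, conjTranspose_fromCols_eq_fromRows_conjTranspose,
    conjTranspose_fromCols_eq_fromRows_conjTranspose, mul_fromCols P A, mul_fromCols P E,
    fromRows_mul_fromCols, fromRows_mul_fromCols]
  simp only [kypM, Matrix.mul_assoc, conjTranspose_zero, Matrix.zero_mul, Matrix.mul_zero,
    sub_eq_add_neg, fromBlocks_neg, fromBlocks_add, neg_zero, add_zero]

theorem stmt_5_general {n m : ℕ} (E A : Matrix (Fin n) (Fin n) ℂ) (B : Matrix (Fin n) (Fin m) ℂ)
    (Q : Matrix (Fin n) (Fin n) ℂ) (S : Matrix (Fin n) (Fin m) ℂ)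
    (R : Matrix (Fin m) (Fin m) ℂ)
    (hR : R.IsHermitian)
    (W T : Matrix (Fin n) (Fin n) ℂ) (F : Matrix (Fin m) (Fin n) ℂ)
    (hW : IsUnit W)
    (P : Matrix (Fin n) (Fin n) ℂ) :
    kypM (W * E * T) (W * (A + B * F) * T) (W * B)
        (Tᴴ * (Q + S * F + Fᴴ * Sᴴ + Fᴴ * R * F) * T) (Tᴴ * (S + Fᴴ * R)) R
        ((W⁻¹)ᴴ * P * W⁻¹)
      = (fromBlocks T 0 (F * T) 1)ᴴ * kypM E A B Q S R P * fromBlocks T 0 (F * T) 1 := by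
  set 𝒯 : Matrix (Fin n ⊕ Fin m) (Fin n ⊕ Fin m) ℂ := fromBlocks T 0 (F * T) 1 with h𝒯
  have hA : fromCols (W * (A + B * F) * T) (W * B) = W * (fromCols A B * 𝒯) := by
    rw [fromCols_mul_fromBlocks_feedback, mul_fromCols, Matrix.mul_assoc]
  have hE : fromCols (W * E * T) (0 : Matrix (Fin n) (Fin m) ℂ)
      = W * (fromCols E (0 : Matrix (Fin n) (Fin m) ℂ) * 𝒯) := by
    rw [fromCols_mul_fromBlocks_feedback, mul_fromCols, Matrix.zero_mul, add_zero,
      Matrix.mul_zero, Matrix.mul_assoc]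
  rw [kypM_eq_sub_add, kypM_eq_sub_add, hA, hE, conjTranspose_mul_mul_mul_of_isUnit hW,
    conjTranspose_mul_mul_mul_of_isUnit hW,
    ← conjTranspose_fromBlocks_feedback_mul_mul Q S hR T F, ← h𝒯]
  simp only [conjTranspose_mul, Matrix.mul_add, Matrix.add_mul, Matrix.mul_sub,
    Matrix.sub_mul, Matrix.mul_assoc]

/-- the KYP matrices of feedback equivalent weighted systems are congruent
via `𝒯_F`. -/
theorem stmt_5 {n m : ℕ} (E A : Matrix (Fin n) (Fin n) ℂ) (B : Matrix (Fin n) (Fin m) ℂ)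
    (Q : Matrix (Fin n) (Fin n) ℂ) (S : Matrix (Fin n) (Fin m) ℂ)
    (R : Matrix (Fin m) (Fin m) ℂ)
    (hreg : RegularPencil E A) (hQ : Q.IsHermitian) (hR : R.IsHermitian)
    (W T : Matrix (Fin n) (Fin n) ℂ) (F : Matrix (Fin m) (Fin n) ℂ)
    (hW : IsUnit W) (hT : IsUnit T)
    (P : Matrix (Fin n) (Fin n) ℂ) (hP : P.IsHermitian) :
    kypM (W * E * T) (W * (A + B * F) * T) (W * B)
        (Tᴴ * (Q + S * F + Fᴴ * Sᴴ + Fᴴ * R * F) * T) (Tᴴ * (S + Fᴴ * R)) R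
        ((W⁻¹)ᴴ * P * W⁻¹)
      = (fromBlocks T 0 (F * T) 1)ᴴ * kypM E A B Q S R P * fromBlocks T 0 (F * T) 1 :=
  stmt_5_general E A B Q S R hR W T F hW P
end
end

section
/- Let (E,A,B,Q,S,R) be a weighted system, let W, T ∈ ℂ^{n×n} be invertible and F ∈ ℂ^{m×n}, and define the feedback-equivalent weighted system E_F := WET, A_F := W(A+BF)T, B_F := WB, Q_F := T^*(Q + SF + F^*S^* + F^*RF)T, S_F := T^*(S + F^*R), R_F := R. Let z ∈ ℂ with |z| = 1, det(zE−A) ≠ 0 and det(zE_F−A_F) ≠ 0. Then Θ(z) := I_m + FT(zE_F−A_F)⁻¹B_F is invertible, and Φ_F(z) = Θ(z)^* Φ(z) Θ(z), where Φ(z) and Φ_F(z) denote the Popov functions of (E,A,B,Q,S,R) and (E_F,A_F,B_F,Q_F,S_F,R_F) evaluated at z. -/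
open Matrix Filter
open scoped ComplexOrder

set_option synthInstance.maxHeartbeats 1000000
set_option maxHeartbeats 1000000

noncomputable section

/-- relation of the Popov functions of feedback equivalent weighted
systems on the unit circle. -/
theorem stmt_6 {n m : ℕ} (E A : Matrix (Fin n) (Fin n) ℂ) (B : Matrix (Fin n) (Fin m) ℂ)
    (Q : Matrix (Fin n) (Fin n) ℂ) (S : Matrix (Fin n) (Fin m) ℂ)
    (R : Matrix (Fin m) (Fin m) ℂ)
    (hreg : RegularPencil E A) (hQ : Q.IsHermitian) (hR : R.IsHermitian)
    (W T : Matrix (Fin n) (Fin n) ℂ) (F : Matrix (Fin m) (Fin n) ℂ)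
    (hW : IsUnit W) (hT : IsUnit T)
    (EF AF : Matrix (Fin n) (Fin n) ℂ) (BF : Matrix (Fin n) (Fin m) ℂ)
    (QF : Matrix (Fin n) (Fin n) ℂ) (SF : Matrix (Fin n) (Fin m) ℂ)
    (RF : Matrix (Fin m) (Fin m) ℂ)
    (hEF : EF = W * E * T) (hAF : AF = W * (A + B * F) * T) (hBF : BF = W * B)
    (hQF : QF = Tᴴ * (Q + S * F + Fᴴ * Sᴴ + Fᴴ * R * F) * T)
    (hSF : SF = Tᴴ * (S + Fᴴ * R)) (hRF : RF = R)
    (z : ℂ) (hz : ‖z‖ = 1)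
    (hdet : (z • E - A).det ≠ 0) (hdetF : (z • EF - AF).det ≠ 0)
    (Θ : Matrix (Fin m) (Fin m) ℂ)
    (hΘ : Θ = 1 + F * T * (z • EF - AF)⁻¹ * BF) :
    IsUnit Θ ∧
      popovEval EF AF BF QF SF RF z = Θᴴ * popovEval E A B Q S R z * Θ := by
  set M := z • E - A with hMdef
  set N := z • E - A - B * F with hNdef
  have hdetW : IsUnit W.det := (Matrix.isUnit_iff_isUnit_det W).mp hW
  have hdetT : IsUnit T.det := (Matrix.isUnit_iff_isUnit_det T).mp hT
  have hMF : z • EF - AF = W * N * T := by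
    subst hEF hAF
    rw [hNdef, Matrix.mul_sub, Matrix.mul_sub, Matrix.sub_mul, Matrix.sub_mul, Matrix.mul_add,
      Matrix.add_mul, mul_smul_comm, smul_mul_assoc]
    abel
  have hdetN : IsUnit N.det := by
    rw [hMF, Matrix.det_mul, Matrix.det_mul] at hdetF
    exact isUnit_iff_ne_zero.mpr (fun h => hdetF (by simp [h]))
  have hdetM : IsUnit M.det := isUnit_iff_ne_zero.mpr hdet
  have hNN : N * N⁻¹ = 1 := Matrix.mul_nonsing_inv _ hdetN
  have hN'N : N⁻¹ * N = 1 := Matrix.nonsing_inv_mul _ hdetN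
  have hMM : M * M⁻¹ = 1 := Matrix.mul_nonsing_inv _ hdetM
  have hM'M : M⁻¹ * M = 1 := Matrix.nonsing_inv_mul _ hdetM
  have hinvF : (z • EF - AF)⁻¹ = T⁻¹ * (N⁻¹ * W⁻¹) := by
    rw [hMF, Matrix.mul_inv_rev, Matrix.mul_inv_rev]
  have hTGF : T * ((z • EF - AF)⁻¹ * BF) = N⁻¹ * B := by
    rw [hinvF, hBF]
    simp only [← Matrix.mul_assoc]
    rw [Matrix.mul_nonsing_inv _ hdetT, Matrix.one_mul,
      Matrix.mul_assoc N⁻¹ W⁻¹ W, Matrix.nonsing_inv_mul _ hdetW, Matrix.mul_one]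
  have hΘ' : Θ = 1 + F * (N⁻¹ * B) := by
    rw [hΘ, ← hTGF]
    simp only [Matrix.mul_assoc]
  have hMN : M = N + B * F := by rw [hNdef, hMdef]; abel
  have hkey : M * (N⁻¹ * B) = B * Θ := by
    rw [hMN, hΘ', Matrix.add_mul, Matrix.mul_add, Matrix.mul_one, ← Matrix.mul_assoc N, hNN,
      Matrix.one_mul, Matrix.mul_assoc]
  have hGΘ : M⁻¹ * B * Θ = N⁻¹ * B := by
    rw [Matrix.mul_assoc, ← hkey, ← Matrix.mul_assoc, hM'M, Matrix.one_mul]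
  have hkey2 : N * (M⁻¹ * B) = B * (1 - F * (M⁻¹ * B)) := by
    rw [hNdef, ← hMdef, Matrix.sub_mul, Matrix.mul_sub, Matrix.mul_one, ← Matrix.mul_assoc M,
      hMM, Matrix.one_mul, Matrix.mul_assoc]
  have h3 : N⁻¹ * B * (1 - F * (M⁻¹ * B)) = M⁻¹ * B := by
    rw [Matrix.mul_assoc, ← hkey2, ← Matrix.mul_assoc, hN'N, Matrix.one_mul]
  have hΘinv : Θ * (1 - F * (M⁻¹ * B)) = 1 := by
    rw [hΘ', Matrix.add_mul, Matrix.one_mul, Matrix.mul_assoc F, h3]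
    abel
  have hΘunit : IsUnit Θ := by
    rw [Matrix.isUnit_iff_isUnit_det]
    have : Θ.det * (1 - F * (M⁻¹ * B)).det = 1 := by rw [← Matrix.det_mul, hΘinv, Matrix.det_one]
    exact IsUnit.of_mul_eq_one _ this
  refine ⟨hΘunit, ?_⟩
  set L : Matrix (Fin n ⊕ Fin m) (Fin n ⊕ Fin m) ℂ :=
    fromBlocks T 0 (F * T) (1 : Matrix (Fin m) (Fin m) ℂ) with hL
  have hblocks : fromBlocks QF SF SFᴴ RF = Lᴴ * fromBlocks Q S Sᴴ R * L := by
    rw [hL, Matrix.fromBlocks_conjTranspose, Matrix.fromBlocks_multiply,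
      Matrix.fromBlocks_multiply]
    simp only [conjTranspose_zero, conjTranspose_one, Matrix.zero_mul, Matrix.mul_zero,
      Matrix.one_mul, Matrix.mul_one, add_zero, zero_add, conjTranspose_mul,
      conjTranspose_add, conjTranspose_conjTranspose]
    rw [hQF, hSF, hRF]
    simp only [Matrix.mul_add, Matrix.add_mul, Matrix.mul_assoc,
      conjTranspose_add, conjTranspose_mul, conjTranspose_conjTranspose, hR.eq]
    congr 1 <;> abel
  have hrows : L * fromRows ((z • EF - AF)⁻¹ * BF) (1 : Matrix (Fin m) (Fin m) ℂ) = fromRows (M⁻¹ * B) (1 : Matrix (Fin m) (Fin m) ℂ) * Θ := by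
    rw [hL, Matrix.fromBlocks_mul_fromRows, Matrix.fromRows_mul]
    simp only [Matrix.zero_mul, Matrix.mul_one, add_zero]
    rw [hTGF, ← hGΘ, Matrix.one_mul, Matrix.mul_assoc F T, hTGF, hΘ']
    congr 1
    abel
  have e1 : (L * fromRows ((z • EF - AF)⁻¹ * BF) (1 : Matrix (Fin m) (Fin m) ℂ))ᴴ * fromBlocks Q S Sᴴ R *
      (L * fromRows ((z • EF - AF)⁻¹ * BF) (1 : Matrix (Fin m) (Fin m) ℂ)) =
      (fromRows ((z • EF - AF)⁻¹ * BF) (1 : Matrix (Fin m) (Fin m) ℂ))ᴴ * (Lᴴ * fromBlocks Q S Sᴴ R * L) *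
      fromRows ((z • EF - AF)⁻¹ * BF) (1 : Matrix (Fin m) (Fin m) ℂ) := by
    rw [conjTranspose_mul]
    simp only [Matrix.mul_assoc]
  have e2 : (fromRows (M⁻¹ * B) (1 : Matrix (Fin m) (Fin m) ℂ) * Θ)ᴴ * fromBlocks Q S Sᴴ R * (fromRows (M⁻¹ * B) (1 : Matrix (Fin m) (Fin m) ℂ) * Θ) =
      Θᴴ * ((fromRows (M⁻¹ * B) (1 : Matrix (Fin m) (Fin m) ℂ))ᴴ * fromBlocks Q S Sᴴ R * fromRows (M⁻¹ * B) (1 : Matrix (Fin m) (Fin m) ℂ)) * Θ := by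
    rw [conjTranspose_mul]
    simp only [Matrix.mul_assoc]
  unfold popovEval
  rw [hblocks]; exact e1.symm.trans (by rw [hrows, e2]; rfl)
end
end

section
/- Let (E,A,B,Q,S,R) be a weighted system with system space 𝒱. If there exists a Hermitian P ∈ ℂ^{n×n} such that v^* M(P) v ≥ 0 (a real number) for every v ∈ 𝒱, then for every z ∈ ℂ with |z| = 1 and det(zE−A) ≠ 0, the Hermitian matrix Φ(z) is positive semidefinite. -/
open Matrix Filter
open scoped ComplexOrder

set_option synthInstance.maxHeartbeats 1000000
set_option maxHeartbeats 1000000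

noncomputable section

lemma quad_conj {k l : Type} [Fintype k] [Fintype l] (M : Matrix k l ℂ) (P : Matrix k k ℂ)
    (v : l → ℂ) : star v ⬝ᵥ ((Mᴴ * P * M) *ᵥ v) = star (M *ᵥ v) ⬝ᵥ (P *ᵥ (M *ᵥ v)) := by
  rw [star_mulVec, ← Matrix.mulVec_mulVec, ← Matrix.mulVec_mulVec, dotProduct_mulVec]

/-- KYP lemma for IDEs, necessity part: a solution of the KYP
inequality on the system space implies positive semidefiniteness of the Popov
function on the unit circle. -/
theorem stmt_8 {n m : ℕ} (E A : Matrix (Fin n) (Fin n) ℂ) (B : Matrix (Fin n) (Fin m) ℂ)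
    (Q : Matrix (Fin n) (Fin n) ℂ) (S : Matrix (Fin n) (Fin m) ℂ)
    (R : Matrix (Fin m) (Fin m) ℂ)
    (hreg : RegularPencil E A) (hQ : Q.IsHermitian) (hR : R.IsHermitian)
    (hP : ∃ P : Matrix (Fin n) (Fin n) ℂ, P.IsHermitian ∧
      ∀ v ∈ systemSpace E A B, 0 ≤ star v ⬝ᵥ (kypM E A B Q S R P *ᵥ v)) :
    ∀ z : ℂ, ‖z‖ = 1 → (z • E - A).det ≠ 0 →
      (popovEval E A B Q S R z).PosSemidef := by
  obtain ⟨P, hPH, hPineq⟩ := hP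
  intro z hz hdet
  have hW : (fromBlocks Q S Sᴴ R).IsHermitian := by
    rw [Matrix.isHermitian_fromBlocks_iff]
    refine ⟨hQ, ?_, ?_, hR⟩ <;> simp
  have hPopov : popovEval E A B Q S R z =
      (fromRows ((z • E - A)⁻¹ * B) (1 : Matrix (Fin m) (Fin m) ℂ))ᴴ * fromBlocks Q S Sᴴ R *
        fromRows ((z • E - A)⁻¹ * B) 1 := rfl
  refine posSemidef_iff_dotProduct_mulVec.mpr ⟨?_, ?_⟩
  · rw [hPopov]; exact Matrix.isHermitian_conjTranspose_mul_mul _ hW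
  intro u
  set x0 : Fin n → ℂ := ((z • E - A)⁻¹ * B) *ᵥ u with hx0def
  have hx0 : (z • E - A) *ᵥ x0 = B *ᵥ u := by
    rw [hx0def, Matrix.mulVec_mulVec, ← Matrix.mul_assoc,
      Matrix.mul_nonsing_inv _ (Ne.isUnit hdet), Matrix.one_mul]
  have hkey : z • (E *ᵥ x0) = A *ᵥ x0 + B *ᵥ u := by
    rw [Matrix.sub_mulVec, Matrix.smul_mulVec, sub_eq_iff_eq_add'] at hx0
    exact hx0
  set v : Fin n ⊕ Fin m → ℂ := Sum.elim x0 u with hvdef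
  have hvmem : v ∈ systemSpace E A B := by
    apply Submodule.subset_span
    refine ⟨fun j => z ^ j • x0, fun j => z ^ j • u, ?_, 0, by simp [hvdef]⟩
    intro j
    show E *ᵥ (z ^ (j + 1) • x0) = A *ᵥ (z ^ j • x0) + B *ᵥ (z ^ j • u)
    rw [Matrix.mulVec_smul, Matrix.mulVec_smul, Matrix.mulVec_smul, ← smul_add, ← hkey,
      smul_smul, ← pow_succ]
  have hM : kypM E A B Q S R P = fromBlocks Q S Sᴴ R +
      ((fromCols A B)ᴴ * P * fromCols A B -
        (fromCols E (0 : Matrix (Fin n) (Fin m) ℂ))ᴴ * P *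
          fromCols E (0 : Matrix (Fin n) (Fin m) ℂ)) := by
    simp only [conjTranspose_fromCols_eq_fromRows_conjTranspose, fromRows_mul,
      mul_fromCols, fromRows_fromCols_eq_fromBlocks, conjTranspose_zero,
      Matrix.zero_mul, Matrix.mul_zero]
    ext (i | i) (j | j) <;>
      simp [kypM, Matrix.sub_apply, Matrix.add_apply] <;> ring
  have hDv : fromCols A B *ᵥ v = z • (E *ᵥ x0) := by
    rw [hvdef, fromCols_mulVec_sumElim, hkey]
  have hFv : fromCols E (0 : Matrix (Fin n) (Fin m) ℂ) *ᵥ v = E *ᵥ x0 := by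
    rw [hvdef, fromCols_mulVec_sumElim, Matrix.zero_mulVec, add_zero]
  have hcancel : star v ⬝ᵥ (kypM E A B Q S R P *ᵥ v) =
      star v ⬝ᵥ (fromBlocks Q S Sᴴ R *ᵥ v) := by
    rw [hM, Matrix.add_mulVec, dotProduct_add, Matrix.sub_mulVec, dotProduct_sub,
      quad_conj, quad_conj, hDv, hFv]
    have : star (z • (E *ᵥ x0)) ⬝ᵥ (P *ᵥ (z • (E *ᵥ x0))) =
        star (E *ᵥ x0) ⬝ᵥ (P *ᵥ (E *ᵥ x0)) := by
      have h1 : (starRingEnd ℂ) z * z = 1 := by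
        rw [mul_comm, Complex.mul_conj, Complex.normSq_eq_norm_sq, hz]
        norm_num
      rw [star_smul, Matrix.mulVec_smul, smul_dotProduct, dotProduct_smul, smul_smul]
      show ((starRingEnd ℂ) z * z) • _ = _
      rw [h1, one_smul]
    rw [this]; ring
  have hCv : fromRows ((z • E - A)⁻¹ * B) (1 : Matrix (Fin m) (Fin m) ℂ) *ᵥ u = v := by
    rw [fromRows_mulVec, Matrix.one_mulVec, hvdef, hx0def]
  have := hPineq v hvmem
  rw [hcancel] at this
  rw [popovEval]
  refine le_of_le_of_eq this ?_
  rw [← hCv]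
  exact (quad_conj _ _ u).symm
end
end

section
/- Let (E,A,B,Q,S,R) be a weighted system and ω ∈ ℝ with det(e^{iω}E − A) ≠ 0. Set E_ω := −i·e^{iω/2}·E, A_ω := −i·e^{−iω/2}·A, B_ω := i·e^{−iω/2}·B, s_ω := 2·sin(ω/2), Q_ω := s_ω·Q, S_ω := s_ω·S, R_ω := s_ω·R, and D(ω) := i·e^{iω/2}·[[0, E_ω−A_ω, B_ω],[E_ω^*−A_ω^*, Q_ω, S_ω],[B_ω^*, S_ω^*, R_ω]] ∈ ℂ^{(2n+m)×(2n+m)} (this matrix equals e^{iω}𝒜^* − 𝒜, the palindromic pencil evaluated at e^{iω}). Then E_ω − A_ω is invertible, and for U := [[I_n, 0, (E_ω^*−A_ω^*)⁻¹(Q_ω(E_ω−A_ω)⁻¹B_ω − S_ω)],[0, I_n, −(E_ω−A_ω)⁻¹B_ω],[0, 0, I_m]] one has U^* D(ω) U = i·e^{iω/2}·[[0, E_ω−A_ω, 0],[E_ω^*−A_ω^*, Q_ω, 0],[0, 0, 2·sin(ω/2)·Φ(e^{iω})]], where Φ(e^{iω}) is the Popov function of (E,A,B,Q,S,R) evaluated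 at e^{iω}. -/
open Matrix Filter
open scoped ComplexOrder

set_option synthInstance.maxHeartbeats 1000000
set_option maxHeartbeats 1000000

noncomputable section

lemma fromColumns_zero_fromRows {m₁ m₂ n₁ n₂ : Type*} (X : Matrix m₁ n₂ ℂ) (Y : Matrix m₂ n₂ ℂ) :
    fromCols (0 : Matrix (m₁ ⊕ m₂) n₁ ℂ) (fromRows X Y) = fromBlocks 0 X 0 Y := by
  ext (i | i) (j | j) <;> simp [fromCols, fromRows, fromBlocks] <;> rfl

lemma key_congr {n m : ℕ} (F Q₀ : Matrix (Fin n) (Fin n) ℂ) (B₀ S₀ G K : Matrix (Fin n) (Fin m) ℂ)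
    (R₀ : Matrix (Fin m) (Fin m) ℂ)
    (hQ : Q₀ᴴ = Q₀)
    (hFG : F * G = -B₀)
    (hK : Fᴴ * K = -(Q₀ * G + S₀))
    (hBK : B₀ᴴ * K = Gᴴ * (Q₀ * G + S₀)) :
    (fromBlocks 1 (fromCols 0 K) 0 (fromBlocks 1 G 0 1))ᴴ *
      (fromBlocks 0 (fromCols F B₀) (fromRows Fᴴ B₀ᴴ) (fromBlocks Q₀ S₀ S₀ᴴ R₀)) *
      (fromBlocks 1 (fromCols 0 K) 0 (fromBlocks 1 G 0 1)) =
    fromBlocks 0 (fromCols F 0) (fromRows Fᴴ 0)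
      (fromBlocks Q₀ 0 0 (Gᴴ * Q₀ * G + Gᴴ * S₀ + S₀ᴴ * G + R₀)) := by
  have hGF : Gᴴ * Fᴴ = -B₀ᴴ := by
    rw [← conjTranspose_mul, hFG, conjTranspose_neg]
  have hKF : Kᴴ * F = -(Gᴴ * Q₀ + S₀ᴴ) := by
    have := congrArg conjTranspose hK
    simpa [conjTranspose_mul, hQ, Matrix.mul_add, Matrix.add_mul] using this
  have hKB : Kᴴ * B₀ = (Gᴴ * Q₀ + S₀ᴴ) * G := by
    have := congrArg conjTranspose hBK
    simpa [conjTranspose_mul, hQ, Matrix.mul_add, Matrix.add_mul, Matrix.mul_assoc] using this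
  rw [fromBlocks_conjTranspose, conjTranspose_fromCols_eq_fromRows_conjTranspose,
    fromBlocks_conjTranspose]
  simp only [fromBlocks_multiply, fromCols_mul_fromBlocks, fromBlocks_mul_fromRows,
    fromRows_mul_fromCols, fromCols_mul_fromRows, fromRows_mul, mul_fromCols,
    Matrix.mul_one, Matrix.one_mul, Matrix.mul_zero, Matrix.zero_mul, conjTranspose_zero,
    conjTranspose_one, add_zero, zero_add, Matrix.neg_mul, Matrix.mul_neg]
  simp only [hFG, hGF, hK, hKF, hKB, neg_add_cancel, fromCols_fromRows_eq_fromBlocks,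
    fromRows_fromCols_eq_fromBlocks, fromBlocks_multiply, fromBlocks_add,
    Matrix.zero_mul, Matrix.mul_zero, Matrix.mul_one, Matrix.one_mul, Matrix.neg_mul,
    add_zero, zero_add]
  simp only [neg_one_smul, ← neg_add, fromColumns_zero_fromRows, fromBlocks_add,
    neg_add_cancel, add_zero, zero_add]
  rw [Matrix.add_mul]
  abel


/-- congruence transformation of the palindromic pencil evaluated on
the unit circle, block-diagonalizing it with the Popov function in the corner. -/
theorem stmt_10 {n m : ℕ} (E A : Matrix (Fin n) (Fin n) ℂ) (B : Matrix (Fin n) (Fin m) ℂ)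
    (Q : Matrix (Fin n) (Fin n) ℂ) (S : Matrix (Fin n) (Fin m) ℂ)
    (R : Matrix (Fin m) (Fin m) ℂ)
    (hreg : RegularPencil E A) (hQ : Q.IsHermitian) (hR : R.IsHermitian)
    (ω : ℝ) (hdet : ((Complex.exp ((ω : ℂ) * Complex.I)) • E - A).det ≠ 0)
    (Eω Aω : Matrix (Fin n) (Fin n) ℂ) (Bω : Matrix (Fin n) (Fin m) ℂ)
    (Qω : Matrix (Fin n) (Fin n) ℂ) (Sω : Matrix (Fin n) (Fin m) ℂ)
    (Rω : Matrix (Fin m) (Fin m) ℂ)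
    (hEω : Eω = (-Complex.I * Complex.exp (((ω / 2 : ℝ) : ℂ) * Complex.I)) • E)
    (hAω : Aω = (-Complex.I * Complex.exp (-(((ω / 2 : ℝ) : ℂ) * Complex.I))) • A)
    (hBω : Bω = (Complex.I * Complex.exp (-(((ω / 2 : ℝ) : ℂ) * Complex.I))) • B)
    (hQω : Qω = ((2 * Real.sin (ω / 2) : ℝ) : ℂ) • Q)
    (hSω : Sω = ((2 * Real.sin (ω / 2) : ℝ) : ℂ) • S)
    (hRω : Rω = ((2 * Real.sin (ω / 2) : ℝ) : ℂ) • R)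
    (D U : Matrix (Fin n ⊕ (Fin n ⊕ Fin m)) (Fin n ⊕ (Fin n ⊕ Fin m)) ℂ)
    (hD : D = (Complex.I * Complex.exp (((ω / 2 : ℝ) : ℂ) * Complex.I)) •
      fromBlocks 0 (fromCols (Eω - Aω) Bω) (fromRows (Eωᴴ - Aωᴴ) Bωᴴ)
        (fromBlocks Qω Sω Sωᴴ Rω))
    (hU : U = fromBlocks 1
      (fromCols 0 ((Eωᴴ - Aωᴴ)⁻¹ * (Qω * (Eω - Aω)⁻¹ * Bω - Sω)))
      0 (fromBlocks 1 (-((Eω - Aω)⁻¹ * Bω)) 0 1)) :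
    IsUnit (Eω - Aω) ∧
      Uᴴ * D * U = (Complex.I * Complex.exp (((ω / 2 : ℝ) : ℂ) * Complex.I)) •
        fromBlocks 0 (fromCols (Eω - Aω) 0) (fromRows (Eωᴴ - Aωᴴ) 0)
          (fromBlocks Qω 0 0 (((2 * Real.sin (ω / 2) : ℝ) : ℂ) •
            popovEval E A B Q S R (Complex.exp ((ω : ℂ) * Complex.I)))) := by
  set z : ℂ := Complex.exp ((ω : ℂ) * Complex.I) with hz
  set e : ℂ := Complex.exp (((ω / 2 : ℝ) : ℂ) * Complex.I) with he
  set e' : ℂ := Complex.exp (-(((ω / 2 : ℝ) : ℂ) * Complex.I)) with he'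
  set c : ℂ := -Complex.I * e' with hcdef
  set M : Matrix (Fin n) (Fin n) ℂ := z • E - A with hM
  set G : Matrix (Fin n) (Fin m) ℂ := M⁻¹ * B with hGdef
  have he'z : e' * z = e := by
    rw [he', hz, he, ← Complex.exp_add]; congr 1; push_cast; ring
  have hc0 : c ≠ 0 := by
    simp [hcdef, he', Complex.exp_ne_zero, Complex.I_ne_zero]
  have hMdet : IsUnit M.det := isUnit_iff_ne_zero.2 hdet
  have hEA : Eω - Aω = c • M := by
    have hcz : c * z = -Complex.I * e := by rw [hcdef, mul_assoc, he'z]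
    rw [hEω, hAω, hM, smul_sub, smul_smul, hcz]
  have hFdet : IsUnit (Eω - Aω).det := by
    rw [hEA, Matrix.det_smul]; exact (IsUnit.pow _ (isUnit_iff_ne_zero.2 hc0)).mul hMdet
  have hFunit : IsUnit (Eω - Aω) := (Matrix.isUnit_iff_isUnit_det _).2 hFdet
  have hFinv : (Eω - Aω)⁻¹ = c⁻¹ • M⁻¹ := by
    apply Matrix.inv_eq_right_inv
    rw [hEA, Matrix.smul_mul, Matrix.mul_smul, smul_smul, Matrix.mul_nonsing_inv _ hMdet,
      mul_inv_cancel₀ hc0, one_smul]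
  have hBc : Bω = (-c) • B := by
    rw [hBω, hcdef]; congr 1; ring
  have hG : (Eω - Aω)⁻¹ * Bω = -G := by
    rw [hFinv, hBc, Matrix.smul_mul, Matrix.mul_smul, smul_smul, hGdef]
    rw [show c⁻¹ * -c = -1 by field_simp]
    rw [neg_one_smul]
  have hFG : (Eω - Aω) * G = -Bω := by
    rw [hEA, hGdef, Matrix.smul_mul, ← Matrix.mul_assoc, Matrix.mul_nonsing_inv _ hMdet,
      Matrix.one_mul, hBc, neg_smul, neg_neg]
  have hFH : Eωᴴ - Aωᴴ = (Eω - Aω)ᴴ := (conjTranspose_sub _ _).symm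
  have hFHdet : IsUnit ((Eω - Aω)ᴴ).det := by
    rw [Matrix.det_conjTranspose]; exact hFdet.star
  set K : Matrix (Fin n) (Fin m) ℂ :=
    (Eωᴴ - Aωᴴ)⁻¹ * (Qω * (Eω - Aω)⁻¹ * Bω - Sω) with hKdef
  have hX : Qω * (Eω - Aω)⁻¹ * Bω - Sω = -(Qω * G + Sω) := by
    rw [Matrix.mul_assoc, hG, Matrix.mul_neg]; abel
  have hQωH : Qωᴴ = Qω := by
    rw [hQω, Matrix.conjTranspose_smul, hQ.eq, Complex.star_def, Complex.conj_ofReal]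
  have hK : (Eω - Aω)ᴴ * K = -(Qω * G + Sω) := by
    rw [hKdef, hFH, ← Matrix.mul_assoc, Matrix.mul_nonsing_inv _ hFHdet, Matrix.one_mul, hX]
  have hBK : Bωᴴ * K = Gᴴ * (Qω * G + Sω) := by
    rw [hKdef, hFH, ← Matrix.conjTranspose_nonsing_inv, ← Matrix.mul_assoc,
      ← Matrix.conjTranspose_mul, hG, hX, conjTranspose_neg, Matrix.neg_mul, Matrix.mul_neg,
      neg_neg]
  refine ⟨hFunit, ?_⟩
  have hUeq : U = fromBlocks 1 (fromCols 0 K) 0 (fromBlocks 1 G 0 1) := by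
    rw [hU, hG, neg_neg]
  have hmain := key_congr (Eω - Aω) Qω Bω Sω G K Rω hQωH hFG hK hBK
  have hpop : ((2 * Real.sin (ω / 2) : ℝ) : ℂ) • popovEval E A B Q S R z =
      Gᴴ * Qω * G + Gᴴ * Sω + Sωᴴ * G + Rω := by
    simp only [popovEval, ← hz, ← hM, ← hGdef]
    rw [conjTranspose_fromRows_eq_fromCols_conjTranspose, conjTranspose_one,
      fromCols_mul_fromBlocks]
    erw [fromCols_mul_fromRows]
    simp only [hQω, hSω, hRω, Matrix.conjTranspose_smul, Complex.star_def,
      Complex.conj_ofReal, Matrix.add_mul, Matrix.mul_add, Matrix.mul_one, Matrix.one_mul,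
      Matrix.smul_mul, Matrix.mul_smul, smul_add, Matrix.mul_assoc]
    abel
  rw [hUeq, hD, Matrix.mul_smul, Matrix.smul_mul, hFH, hmain, hpop]
end
end

section
/- Let (E,A,B,Q,S,R) be a weighted system with system space 𝒱, let q := rank over ℂ(z) of the Popov function, let W, T ∈ ℂ^{n×n} be invertible and F ∈ ℂ^{m×n}, and define the feedback-equivalent weighted system E_F := WET, A_F := W(A+BF)T, B_F := WB, Q_F := T^*(Q + SF + F^*S^* + F^*RF)T, S_F := T^*(S + F^*R), R_F := R, with system space 𝒱_F. Then a triple (X,K,L) ∈ ℂ^{n×n}×ℂ^{q×n}×ℂ^{q×m} with X Hermitian satisfies v^*( M(X) − [K, L]^*[K, L] )w = 0 for all v, w ∈ 𝒱 if and only if the triple (W^{−*}XW^{−1}, KT + LFT, L) satisfies v^*( M_F(W^{−*}XW^{−1}) − [KT+LFT, L]^*[KT+LFT, L] )w = 0 for all v, w ∈ 𝒱_F, where M(·) and M_F(·) denote the KYP matrices of (E,A,B,Q,S,R) and (E_F,A_F,B_F,Q_F,S_F,R_F). -/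
open Matrix Filter
open scoped ComplexOrder

set_option synthInstance.maxHeartbeats 1000000
set_option maxHeartbeats 1000000

noncomputable section

/-- Auxiliary: the feedback transformation matrix identity for the KYP matrix. -/
lemma feedback_kyp_eq {n m q : ℕ} (E A : Matrix (Fin n) (Fin n) ℂ) (B : Matrix (Fin n) (Fin m) ℂ)
    (Q : Matrix (Fin n) (Fin n) ℂ) (S : Matrix (Fin n) (Fin m) ℂ)
    (R : Matrix (Fin m) (Fin m) ℂ)
    (W T : Matrix (Fin n) (Fin n) ℂ) (F : Matrix (Fin m) (Fin n) ℂ)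
    (hW : IsUnit W) (hR : R.IsHermitian)
    (X : Matrix (Fin n) (Fin n) ℂ)
    (K : Matrix (Fin q) (Fin n) ℂ) (L : Matrix (Fin q) (Fin m) ℂ) :
    kypM (W * E * T) (W * (A + B * F) * T) (W * B)
        (Tᴴ * (Q + S * F + Fᴴ * Sᴴ + Fᴴ * R * F) * T) (Tᴴ * (S + Fᴴ * R)) R
        ((W⁻¹)ᴴ * X * W⁻¹)
      - (fromCols (K * T + L * F * T) L)ᴴ * fromCols (K * T + L * F * T) L
    = (fromBlocks T 0 (F * T) 1)ᴴ *
        (kypM E A B Q S R X - (fromCols K L)ᴴ * fromCols K L) *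
        (fromBlocks T 0 (F * T) 1) := by
  have hdet := (Matrix.isUnit_iff_isUnit_det W).mp hW
  have hW1 : W⁻¹ * W = 1 := Matrix.nonsing_inv_mul W hdet
  have hc1 : ∀ (p : ℕ) (Y : Matrix (Fin n) (Fin p) ℂ), Wᴴ * ((W⁻¹)ᴴ * Y) = Y := by
    intro p Y
    rw [← Matrix.mul_assoc, ← Matrix.conjTranspose_mul, hW1, Matrix.conjTranspose_one,
      Matrix.one_mul]
  have hc2 : ∀ (p : ℕ) (Y : Matrix (Fin n) (Fin p) ℂ), W⁻¹ * (W * Y) = Y := by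
    intro p Y
    rw [← Matrix.mul_assoc, hW1, Matrix.one_mul]
  unfold kypM
  rw [conjTranspose_fromCols_eq_fromRows_conjTranspose,
    conjTranspose_fromCols_eq_fromRows_conjTranspose,
    fromRows_mul_fromCols, fromRows_mul_fromCols,
    fromBlocks_conjTranspose]
  simp only [sub_eq_add_neg, fromBlocks_neg, fromBlocks_add, fromBlocks_multiply]
  rw [fromBlocks_inj]
  refine ⟨?_, ?_, ?_, ?_⟩ <;>
  · simp only [conjTranspose_mul, conjTranspose_add, conjTranspose_conjTranspose,
      conjTranspose_zero, conjTranspose_one, Matrix.mul_add, Matrix.add_mul,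
      Matrix.mul_neg, Matrix.neg_mul, Matrix.mul_one, Matrix.one_mul,
      Matrix.mul_zero, Matrix.zero_mul, add_zero, zero_add, Matrix.mul_assoc, hc1, hc2, hR.eq]
    abel

/-- Auxiliary: behaviors transform under feedback equivalence. -/
lemma feedback_behav_iff {n m : ℕ} (E A : Matrix (Fin n) (Fin n) ℂ)
    (B : Matrix (Fin n) (Fin m) ℂ)
    (W T : Matrix (Fin n) (Fin n) ℂ) (F : Matrix (Fin m) (Fin n) ℂ) (hW : IsUnit W)
    (x : ℕ → Fin n → ℂ) (u : ℕ → Fin m → ℂ) :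
    IsBehavior (W * E * T) (W * (A + B * F) * T) (W * B) x u ↔
      IsBehavior E A B (fun j => T *ᵥ x j) (fun j => (F * T) *ᵥ x j + u j) := by
  have hdet := (Matrix.isUnit_iff_isUnit_det W).mp hW
  have hW1 : W⁻¹ * W = 1 := Matrix.nonsing_inv_mul W hdet
  have hc2 : ∀ (p : ℕ) (Y : Matrix (Fin n) (Fin p) ℂ), W⁻¹ * (W * Y) = Y := fun p Y => by
    rw [← Matrix.mul_assoc, hW1, Matrix.one_mul]
  unfold IsBehavior
  constructor
  · intro h j
    have h2 := congrArg (fun v => W⁻¹ *ᵥ v) (h j)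
    simp only [Matrix.mulVec_add, Matrix.mulVec_mulVec, Matrix.mul_assoc, hc2] at h2
    simp only [Matrix.mulVec_add, Matrix.mulVec_mulVec, Matrix.add_mul, Matrix.mul_add,
      Matrix.add_mulVec, Matrix.mul_assoc] at h2 ⊢
    rw [h2]; abel
  · intro h j
    have h2 := congrArg (fun v => W *ᵥ v) (h j)
    simp only [Matrix.mulVec_add, Matrix.mulVec_mulVec, Matrix.mul_assoc] at h2
    simp only [Matrix.mulVec_add, Matrix.mulVec_mulVec, Matrix.add_mul, Matrix.mul_add,
      Matrix.add_mulVec, Matrix.mul_assoc] at h2 ⊢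
    rw [h2]; abel

/-- Auxiliary: the system space transforms under feedback equivalence. -/
lemma feedback_sys_map {n m : ℕ} (E A : Matrix (Fin n) (Fin n) ℂ)
    (B : Matrix (Fin n) (Fin m) ℂ)
    (W T : Matrix (Fin n) (Fin n) ℂ) (F : Matrix (Fin m) (Fin n) ℂ)
    (hW : IsUnit W) (hT : IsUnit T) :
    Submodule.map
        (Matrix.mulVecLin (fromBlocks T 0 (F * T) (1 : Matrix (Fin m) (Fin m) ℂ)))
        (systemSpace (W * E * T) (W * (A + B * F) * T) (W * B)) = systemSpace E A B := by
  have hdetT := (Matrix.isUnit_iff_isUnit_det T).mp hT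
  have hT1 : T * T⁻¹ = 1 := Matrix.mul_nonsing_inv T hdetT
  unfold systemSpace
  rw [Submodule.map_span]
  congr 1
  ext v
  constructor
  · rintro ⟨w, ⟨x, u, hbe, j, rfl⟩, rfl⟩
    refine ⟨fun j => T *ᵥ x j, fun j => (F * T) *ᵥ x j + u j,
      (feedback_behav_iff E A B W T F hW x u).mp hbe, j, ?_⟩
    simp [Matrix.fromBlocks_mulVec, Sum.elim_comp_inl, Sum.elim_comp_inr]
  · rintro ⟨x, u, hbe, j, rfl⟩
    set x' : ℕ → Fin n → ℂ := fun j => T⁻¹ *ᵥ x j with hx'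
    set u' : ℕ → Fin m → ℂ := fun j => u j - F *ᵥ x j with hu'
    have hTx : ∀ j, T *ᵥ x' j = x j := fun j => by
      simp [hx', Matrix.mulVec_mulVec, hT1]
    have hFu : ∀ j, (F * T) *ᵥ x' j + u' j = u j := fun j => by
      simp [hx', hu', Matrix.mulVec_mulVec, Matrix.mul_assoc, hT1]
    refine ⟨Sum.elim (x' j) (u' j), ⟨x', u', ?_, j, rfl⟩, ?_⟩
    · rw [feedback_behav_iff E A B W T F hW]
      have e1 : (fun j => T *ᵥ x' j) = x := funext hTx
      have e2 : (fun j => (F * T) *ᵥ x' j + u' j) = u := funext hFu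
      rw [e1, e2]; exact hbe
    · simp [Matrix.fromBlocks_mulVec, Sum.elim_comp_inl, Sum.elim_comp_inr, hTx, hFu]

/-- solutions of the Lur'e equation transform under feedback
equivalence. -/
theorem stmt_15 {n m : ℕ} (E A : Matrix (Fin n) (Fin n) ℂ) (B : Matrix (Fin n) (Fin m) ℂ)
    (Q : Matrix (Fin n) (Fin n) ℂ) (S : Matrix (Fin n) (Fin m) ℂ)
    (R : Matrix (Fin m) (Fin m) ℂ)
    (hreg : RegularPencil E A) (hQ : Q.IsHermitian) (hR : R.IsHermitian)
    (q : ℕ) (hq : q = (popov E A B Q S R).rank)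
    (W T : Matrix (Fin n) (Fin n) ℂ) (F : Matrix (Fin m) (Fin n) ℂ)
    (hW : IsUnit W) (hT : IsUnit T)
    (X : Matrix (Fin n) (Fin n) ℂ) (hX : X.IsHermitian)
    (K : Matrix (Fin q) (Fin n) ℂ) (L : Matrix (Fin q) (Fin m) ℂ) :
    (∀ v ∈ systemSpace E A B, ∀ w ∈ systemSpace E A B,
        star v ⬝ᵥ ((kypM E A B Q S R X - (fromCols K L)ᴴ * fromCols K L) *ᵥ w)
          = 0) ↔
      (∀ v ∈ systemSpace (W * E * T) (W * (A + B * F) * T) (W * B),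
        ∀ w ∈ systemSpace (W * E * T) (W * (A + B * F) * T) (W * B),
          star v ⬝ᵥ
            ((kypM (W * E * T) (W * (A + B * F) * T) (W * B)
                (Tᴴ * (Q + S * F + Fᴴ * Sᴴ + Fᴴ * R * F) * T) (Tᴴ * (S + Fᴴ * R)) R
                ((W⁻¹)ᴴ * X * W⁻¹) -
              (fromCols (K * T + L * F * T) L)ᴴ *
                fromCols (K * T + L * F * T) L) *ᵥ w) = 0) := by
  set Z : Matrix (Fin n ⊕ Fin m) (Fin n ⊕ Fin m) ℂ :=
    fromBlocks T 0 (F * T) (1 : Matrix (Fin m) (Fin m) ℂ) with hZ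
  have hmap := feedback_sys_map E A B W T F hW hT
  have halg := feedback_kyp_eq E A B Q S R W T F hW hR X K L
  have key : ∀ (N : Matrix (Fin n ⊕ Fin m) (Fin n ⊕ Fin m) ℂ) (v w : Fin n ⊕ Fin m → ℂ),
      star v ⬝ᵥ ((Zᴴ * N * Z) *ᵥ w) = star (Z *ᵥ v) ⬝ᵥ (N *ᵥ (Z *ᵥ w)) := by
    intro N v w
    rw [← Matrix.mulVec_mulVec, ← Matrix.mulVec_mulVec, Matrix.dotProduct_mulVec,
      ← Matrix.star_mulVec]
  constructor
  · intro h v hv w hw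
    rw [halg, key]
    exact h (Z *ᵥ v) (hmap ▸ Submodule.mem_map_of_mem hv)
      (Z *ᵥ w) (hmap ▸ Submodule.mem_map_of_mem hw)
  · intro h v hv w hw
    rw [← hmap] at hv hw
    obtain ⟨v', hv', rfl⟩ := hv
    obtain ⟨w', hw', rfl⟩ := hw
    have := h v' hv' w' hw'
    rw [halg, key] at this
    simpa using this
end
end

section
/- Let n = n1 + n2 and consider the weighted system (E_F,A_F,B_F,Q_F,S_F,R_F) in feedback equivalence form with n3 = 0: E_F := [[I_{n1},0],[0,0]], A_F := [[A11,0],[0,I_{n2}]], B_F := [B1; B2], Q_F := [[Q11,Q12],[Q12^*,Q22]] Hermitian, S_F := [S1; S2], R_F := R Hermitian. Define the EDE data A_s := A11, B_s := B1, Q_s := Q11, S_s := S1 − Q12·B2, R_s := B2^*Q22B2 − B2^*S2 − S2^*B2 + R, and let z𝒜_s^* − 𝒜_s and z𝒜_F^* − 𝒜_F be the palindromic pencils of the weighted systems (I_{n1},A_s,B_s,Q_s,S_s,R_s) and (E_F,A_F,B_F,Q_F,S_F,R_F). Set D := [0_{n1×n2}; Q12; S2^* − B2^*Q22] ∈ ℂ^{(2n1+m)×n2}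 and Û := [[I_{n1},0,0,0,0],[0, −Q12^*, −S2 + Q22B2, −Q22, I_{n2}],[0, I_{n1}, 0, 0, 0],[0, 0, −B2, I_{n2}, 0],[0, 0, I_m, 0, 0]] ∈ ℂ^{(2n+m)×(2n+m)} (row blocks of sizes n1, n2, n1, n2, m; column blocks of sizes n1, n1, m, n2, n2). Then Û is invertible and, for every z ∈ ℂ, Û^*(z𝒜_F^* − 𝒜_F)Û = [[z𝒜_s^* − 𝒜_s, zD, 0],[−D^*, 0, zI_{n2}],[0, −I_{n2}, 0]]. -/
open Matrix Filter
open scoped ComplexOrder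

set_option synthInstance.maxHeartbeats 1000000
set_option maxHeartbeats 1000000

noncomputable section

/-- congruence transformation relating the palindromic pencil of a system
in feedback equivalence form (with `n3 = 0`) to the palindromic pencil of its EDE part. -/
theorem stmt_16 (n1 n2 m : ℕ)
    (A11 : Matrix (Fin n1) (Fin n1) ℂ)
    (B1 : Matrix (Fin n1) (Fin m) ℂ) (B2 : Matrix (Fin n2) (Fin m) ℂ)
    (Q11 : Matrix (Fin n1) (Fin n1) ℂ) (Q12 : Matrix (Fin n1) (Fin n2) ℂ)
    (Q22 : Matrix (Fin n2) (Fin n2) ℂ)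
    (hQ11 : Q11.IsHermitian) (hQ22 : Q22.IsHermitian)
    (S1 : Matrix (Fin n1) (Fin m) ℂ) (S2 : Matrix (Fin n2) (Fin m) ℂ)
    (R : Matrix (Fin m) (Fin m) ℂ) (hR : R.IsHermitian)
    -- the palindromic pencil matrix 𝒜_F of the system in feedback equivalence form
    (AF : Matrix ((Fin n1 ⊕ Fin n2) ⊕ ((Fin n1 ⊕ Fin n2) ⊕ Fin m))
      ((Fin n1 ⊕ Fin n2) ⊕ ((Fin n1 ⊕ Fin n2) ⊕ Fin m)) ℂ)
    (hAF : AF = fromBlocks 0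
      (fromCols (fromBlocks A11 0 0 1) (fromRows B1 B2))
      (fromRows (fromBlocks 1 0 0 0 : Matrix (Fin n1 ⊕ Fin n2) (Fin n1 ⊕ Fin n2) ℂ)ᴴ 0)
      (fromBlocks (fromBlocks Q11 Q12 Q12ᴴ Q22) (fromRows S1 S2) (fromRows S1 S2)ᴴ R))
    -- the palindromic pencil matrix 𝒜_s of the EDE part
    (As : Matrix (Fin n1 ⊕ (Fin n1 ⊕ Fin m)) (Fin n1 ⊕ (Fin n1 ⊕ Fin m)) ℂ)
    (hAs : As = fromBlocks 0 (fromCols A11 B1)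
      (fromRows (1 : Matrix (Fin n1) (Fin n1) ℂ) 0)
      (fromBlocks Q11 (S1 - Q12 * B2) (S1 - Q12 * B2)ᴴ
        (B2ᴴ * Q22 * B2 - B2ᴴ * S2 - S2ᴴ * B2 + R)))
    (D : Matrix (Fin n1 ⊕ (Fin n1 ⊕ Fin m)) (Fin n2) ℂ)
    (hD : D = fromRows 0 (fromRows Q12 (S2ᴴ - B2ᴴ * Q22)))
    (U : Matrix ((Fin n1 ⊕ Fin n2) ⊕ ((Fin n1 ⊕ Fin n2) ⊕ Fin m))
      ((Fin n1 ⊕ (Fin n1 ⊕ Fin m)) ⊕ (Fin n2 ⊕ Fin n2)) ℂ)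
    (hU : U = fromBlocks
      (fromBlocks 1 0 0 (fromCols (-Q12ᴴ) (-S2 + Q22 * B2)))
      (fromBlocks 0 0 (-Q22) 1)
      (fromBlocks 0 (fromBlocks 1 0 0 (-B2)) 0 (fromCols 0 1))
      (fromBlocks (fromRows 0 1) 0 0 0)) :
    Function.Bijective U.mulVecLin ∧
      ∀ z : ℂ, Uᴴ * (z • AFᴴ - AF) * U =
        fromBlocks (z • Asᴴ - As) (fromCols (z • D) 0) (fromRows (-Dᴴ) 0)
          (fromBlocks 0 (z • (1 : Matrix (Fin n2) (Fin n2) ℂ))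
            (-(1 : Matrix (Fin n2) (Fin n2) ℂ)) 0) := by
  have key : Uᴴ * AF * U = fromBlocks As 0 (fromRows Dᴴ 0)
      (fromBlocks 0 0 (1 : Matrix (Fin n2) (Fin n2) ℂ) 0) := by
    subst hAF hAs hD hU
    simp only [fromBlocks_conjTranspose, conjTranspose_fromCols_eq_fromRows_conjTranspose,
      conjTranspose_fromRows_eq_fromCols_conjTranspose, conjTranspose_one, conjTranspose_zero,
      conjTranspose_neg, conjTranspose_add, conjTranspose_sub, conjTranspose_mul,
      conjTranspose_conjTranspose, fromBlocks_multiply, fromCols_mul_fromBlocks,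
      fromBlocks_mul_fromRows, fromCols_mul_fromRows, fromRows_mul_fromCols,
      fromRows_mul, mul_fromCols, Matrix.mul_one, Matrix.one_mul, Matrix.mul_zero,
      Matrix.zero_mul, add_zero, zero_add, Matrix.neg_mul, Matrix.mul_neg, neg_neg, neg_zero,
      hQ22.eq, hQ11.eq, hR.eq, Matrix.add_mul, Matrix.mul_add, sub_eq_add_neg]
    ext i j
    rcases i with ((i | i | i) | (i | i)) <;> rcases j with ((j | j | j) | (j | j)) <;>
      simp [Matrix.fromBlocks, Matrix.add_apply,
        Matrix.neg_apply, Matrix.sub_apply, Matrix.one_apply, Matrix.mul_apply] <;> ring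
  obtain ⟨V, hV⟩ : ∃ V : Matrix ((Fin n1 ⊕ (Fin n1 ⊕ Fin m)) ⊕ (Fin n2 ⊕ Fin n2))
      ((Fin n1 ⊕ Fin n2) ⊕ ((Fin n1 ⊕ Fin n2) ⊕ Fin m)) ℂ,
      V = fromBlocks (fromBlocks 1 0 0 0)
        (fromBlocks 0 0 (fromBlocks 1 0 0 0) (fromRows 0 1))
        (fromBlocks 0 0 0 1)
        (fromBlocks (fromCols 0 1) B2 (fromCols Q12ᴴ Q22) S2) := ⟨_, rfl⟩
  have hUV : U * V = 1 := by
    subst hU hV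
    ext i j
    rcases i with ((i | i) | (i | i) | i) <;> rcases j with ((j | j) | (j | j) | j) <;>
      simp [Matrix.fromBlocks, Matrix.add_apply,
        Matrix.neg_apply, Matrix.sub_apply, Matrix.one_apply, Matrix.mul_apply,
        Matrix.one_apply_ne, Sum.elim_inl, Sum.elim_inr, Finset.sum_ite_eq,
        Finset.sum_ite_eq'] <;> ring
  have hVU : V * U = 1 := by
    subst hU hV
    ext i j
    rcases i with ((i | i | i) | (i | i)) <;> rcases j with ((j | j | j) | (j | j)) <;>
      simp [Matrix.fromBlocks, Matrix.add_apply,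
        Matrix.neg_apply, Matrix.sub_apply, Matrix.one_apply, Matrix.mul_apply,
        Matrix.one_apply_ne, Sum.elim_inl, Sum.elim_inr, Finset.sum_ite_eq,
        Finset.sum_ite_eq'] <;> ring
  constructor
  · refine Function.bijective_iff_has_inverse.mpr ⟨V.mulVecLin, fun v => ?_, fun v => ?_⟩
    · simp [Matrix.mulVecLin_apply, Matrix.mulVec_mulVec, hVU]
    · simp [Matrix.mulVecLin_apply, Matrix.mulVec_mulVec, hUV]
  · intro z
    have h1 : Uᴴ * (z • AFᴴ - AF) * U = z • (Uᴴ * AF * U)ᴴ - Uᴴ * AF * U := by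
      simp only [Matrix.conjTranspose_mul, conjTranspose_conjTranspose, Matrix.sub_mul,
        Matrix.mul_sub, Matrix.smul_mul, Matrix.mul_smul, Matrix.mul_assoc]
    rw [h1, key]
    ext i j
    rcases i with ((i | i | i) | (i | i)) <;> rcases j with ((j | j | j) | (j | j)) <;>
      simp [Matrix.fromBlocks, Matrix.add_apply,
        Matrix.neg_apply, Matrix.sub_apply, Matrix.smul_apply, Matrix.one_apply,
        Matrix.conjTranspose_apply, smul_eq_mul]

    exact if_congr eq_comm rfl rfl
end
end
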